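/- arXiv:1108.4478 — 4 statements merged into one kernel-verified Lean document; each statement's English description precedes it below -/
import Mathlib

section
/- Let G = (L ∪ R, E) be a Tanner graph, let m = |R| be the number of check nodes, let n_{v2} be the number of variable nodes of degree 2 in G, let d_{c,max} ≥ 2 be the maximum degree of a check node in G, and let k ≥ 2 be an integer. If G contains no 2-chain of length 2k or larger and no 2-cycle of length less than or equal to 2k, then m ≥ n_{v2} · (1 + 1/Σ_{i=0}^{k−2} (d_{c,max}−1)^{⌊(i+1)/2⌋}). -/
open SimpleGraph

/-- The (check-node) neighborhood `Γ(S)` of a set `S` of variable nodes: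
all vertices adjacent to some vertex of `S`. -/
def Gam {V : Type} (G : SimpleGraph V) (S : Set V) : Set V :=
  {c | ∃ v ∈ S, G.Adj v c}

/-- The degree of a check node `c` in the induced subgraph `G(S)`
(the subgraph induced by `S ∪ Γ(S)`): the number of its neighbors inside `S`. -/
noncomputable def degIn {V : Type} (G : SimpleGraph V) (S : Set V) (c : V) : ℕ :=
  {v | v ∈ S ∧ G.Adj c v}.ncard

/-- The unsatisfied check nodes `Γ_o(S)`: check nodes of `Γ(S)` of odd degree in `G(S)`. -/
def GamO {V : Type} (G : SimpleGraph V) (S : Set V) : Set V :=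
  {c | c ∈ Gam G S ∧ Odd (degIn G S c)}

/-- The satisfied check nodes `Γ_e(S)`: check nodes of `Γ(S)` of even degree in `G(S)`. -/
def GamE {V : Type} (G : SimpleGraph V) (S : Set V) : Set V :=
  {c | c ∈ Gam G S ∧ Even (degIn G S c)}

/-- The number of neighbors of `v` lying in the set `A`. -/
noncomputable def adjCount {V : Type} (G : SimpleGraph V) (A : Set V) (v : V) : ℕ :=
  {c | c ∈ A ∧ G.Adj v c}.ncard

/-- The degree of a vertex in `G`. -/
noncomputable def degG {V : Type} (G : SimpleGraph V) (v : V) : ℕ :=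
  (G.neighborSet v).ncard

/-- `G` is bipartite with variable nodes `{v | isVar v}` and check nodes `{v | ¬ isVar v}`. -/
def Bipartite {V : Type} (G : SimpleGraph V) (isVar : V → Prop) : Prop :=
  ∀ u v, G.Adj u v → (isVar u ↔ ¬ isVar v)

/-- A trapping set `S` is elementary if every check node of `G(S)` has degree 1 or 2 in `G(S)`. -/
def IsElem {V : Type} (G : SimpleGraph V) (S : Set V) : Prop :=
  ∀ c ∈ Gam G S, degIn G S c = 1 ∨ degIn G S c = 2

/-- Membership in the family `𝒯`: the induced subgraph `G(S)` is connected and every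
variable node of `S` is adjacent to at least two satisfied check nodes. -/
def InT {V : Type} (G : SimpleGraph V) (S : Set V) : Prop :=
  (G.induce (S ∪ Gam G S)).Connected ∧ ∀ v ∈ S, 2 ≤ adjCount G (GamE G S) v

/-- max number of edges of a tree with max degree `d` and all paths of length `≤ L`. -/
def gfun (d L : ℕ) : ℕ := ∑ i ∈ Finset.range L, (d-1)^((i+1)/2)

lemma gfun_pos (d : ℕ) {L : ℕ} (hL : 1 ≤ L) : 1 ≤ gfun d L := by
  have h0 : (0:ℕ) ∈ Finset.range L := Finset.mem_range.mpr (by omega)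
  calc 1 = (d-1)^((0+1)/2) := by norm_num
  _ ≤ _ := Finset.single_le_sum (f := fun i => (d-1)^((i+1)/2)) (fun i _ => Nat.zero_le _) h0

lemma gfun_rec (d L : ℕ) : gfun d (L+2) = (d-1) * gfun d L + (1 + (d-1)) := by
  unfold gfun
  rw [Finset.sum_range_succ' (fun i => (d-1)^((i+1)/2)) (L+1)]
  rw [Finset.sum_range_succ' (fun i => (d-1)^((i+1+1)/2)) L]
  have : ∀ i : ℕ, (d-1)^((i+1+1+1)/2) = (d-1) * (d-1)^((i+1)/2) := by
    intro i
    have : (i+1+1+1)/2 = (i+1)/2 + 1 := by omega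
    rw [this, pow_succ]; ring
  simp only [this, ← Finset.mul_sum]
  norm_num
  ring

section WalkLemmas
variable {W : Type} [DecidableEq W] {T : SimpleGraph W}

lemma unique_nbr_in_path {v u x y : W} (q : T.Walk v u) (hq : q.IsPath)
    (hx : s(v,x) ∈ q.edges) (hy : s(v,y) ∈ q.edges) : x = y := by
  cases q with
  | nil => simp at hx
  | cons h q' =>
    rename_i w
    rw [Walk.edges_cons, List.mem_cons] at hx hy
    have hvq' : v ∉ q'.support := ((Walk.cons_isPath_iff h q').mp hq).2
    have hxw : x = w := by
      rcases hx with hx | hx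
      · rw [Sym2.eq_iff] at hx
        rcases hx with ⟨-, h2⟩ | ⟨h1, -⟩
        · exact h2
        · exact absurd h1 h.ne
      · exact absurd (q'.fst_mem_support_of_mem_edges hx) hvq'
    have hyw : y = w := by
      rcases hy with hy | hy
      · rw [Sym2.eq_iff] at hy
        rcases hy with ⟨-, h2⟩ | ⟨h1, -⟩
        · exact h2
        · exact absurd h1 h.ne
      · exact absurd (q'.fst_mem_support_of_mem_edges hy) hvq'
    rw [hxw, hyw]

lemma edge_of_adj_mem (hac : T.IsAcyclic) {u v x : W} (q : T.Walk u v) (hq : q.IsPath)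
    (hvx : T.Adj v x) (hx : x ∈ q.support) : s(v,x) ∈ q.edges := by
  by_contra hcon
  have hr : (q.dropUntil x hx).IsPath := hq.dropUntil hx
  have hre := q.edges_dropUntil_subset hx
  have : (Walk.cons hvx (q.dropUntil x hx)).IsCycle := by
    rw [Walk.cons_isCycle_iff]
    exact ⟨hr, fun hm => hcon (hre hm)⟩
  exact hac _ this

lemma extend1 (hac : T.IsAcyclic) {u v x y : W} (q : T.Walk u v) (hq : q.IsPath)
    (hxy : x ≠ y) (hvx : T.Adj v x) (hvy : T.Adj v y) :
    ∃ z, T.Adj v z ∧ z ∉ q.support := by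
  by_contra hcon
  push_neg at hcon
  have hx := edge_of_adj_mem hac q hq hvx (hcon x hvx)
  have hy := edge_of_adj_mem hac q hq hvy (hcon y hvy)
  have hx' : s(v,x) ∈ q.reverse.edges := by rw [Walk.edges_reverse]; simpa using hx
  have hy' : s(v,y) ∈ q.reverse.edges := by rw [Walk.edges_reverse]; simpa using hy
  exact hxy (unique_nbr_in_path q.reverse hq.reverse hx' hy')

/-- extend a path by one edge at each end -/
lemma extend2 (hac : T.IsAcyclic) {u v : W} (q : T.Walk u v) (hq : q.IsPath)
    (hu : ∃ x y, x ≠ y ∧ T.Adj u x ∧ T.Adj u y) (hv : ∃ x y, x ≠ y ∧ T.Adj v x ∧ T.Adj v y) :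
    ∃ (a b : W) (r : T.Walk a b), r.IsPath ∧ r.length = q.length + 2 := by
  obtain ⟨x, y, hxy, hvx, hvy⟩ := hv
  obtain ⟨z, hvz, hzs⟩ := extend1 hac q hq hxy hvx hvy
  have hr1 : (Walk.cons hvz.symm q.reverse).IsPath := by
    apply hq.reverse.cons
    simpa using hzs
  set r1 : T.Walk z u := Walk.cons hvz.symm q.reverse with hr1def
  obtain ⟨x', y', hxy', hux, huy⟩ := hu
  obtain ⟨w', huw, hws⟩ := extend1 hac r1 hr1 hxy' hux huy
  refine ⟨w', z, Walk.cons huw.symm r1.reverse, ?_, ?_⟩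
  · apply hr1.reverse.cons
    simpa using hws
  · simp [hr1def]

lemma internal_two_nbrs {u v x : W} (q : T.Walk u v) (hq : q.IsPath)
    (hx : x ∈ q.support) (hxu : x ≠ u) (hxv : x ≠ v) :
    ∃ a b, a ≠ b ∧ T.Adj x a ∧ T.Adj x b := by
  set t := q.takeUntil x hx with ht
  set dd := q.dropUntil x hx with hd
  have htp : t.IsPath := hq.takeUntil hx
  have hdp : dd.IsPath := hq.dropUntil hx
  obtain ⟨a, ha, t', hts⟩ := Walk.exists_eq_cons_of_ne hxu t.reverse
  obtain ⟨b, hb, d', hds⟩ := Walk.exists_eq_cons_of_ne hxv dd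
  refine ⟨a, b, ?_, ha, hb⟩
  have hat : a ∈ t.support := by
    have : a ∈ t.reverse.support := by rw [hts]; simp
    simpa using this
  have hbd : b ∈ dd.support.tail := by
    rw [hds]; simp
  have hnd : q.support.Nodup := hq.support_nodup
  rw [← q.take_spec hx, Walk.support_append] at hnd
  rw [List.nodup_append] at hnd
  intro hab
  exact hnd.2.2 a hat b hbd hab

end WalkLemmas

section InduceLemmas
variable {W : Type} [DecidableEq W] [Fintype W] {T : SimpleGraph W} [DecidableRel T.Adj]

lemma reach_induce {A : Set W} : ∀ {u v : W} (p : T.Walk u v)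
    (hs : ∀ x ∈ p.support, x ∈ A) (hu : u ∈ A) (hv : v ∈ A),
    (T.induce A).Reachable ⟨u, hu⟩ ⟨v, hv⟩ := by
  intro u v p
  induction p with
  | nil => intro _ hu _; rfl
  | cons h p ih =>
    rename_i a b c
    intro hs hu hv
    have hb : b ∈ A := hs b (by simp)
    have step : (T.induce A).Adj ⟨a, hu⟩ ⟨b, hb⟩ := by
      simp [comap_adj]; exact h
    exact (step.reachable).trans (ih (fun x hx => hs x (by simp [hx])) hb hv)

lemma degree_induce_eq_filter (A : Finset W) (x : ↥(A : Set W)) :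
    (T.induce (A : Set W)).degree x = ((T.neighborFinset x.1).filter (· ∈ A)).card := by
  rw [degree]
  apply Finset.card_bij (fun (y : ↥(A : Set W)) _ => (y : W))
  · intro a ha
    simp only [mem_neighborFinset] at ha
    simp only [comap_adj, Function.Embedding.coe_subtype] at ha
    simp only [Finset.mem_filter, mem_neighborFinset]
    exact ⟨ha, a.2⟩
  · intro a _ b _ hab
    exact Subtype.ext hab
  · intro b hb
    simp only [Finset.mem_filter, mem_neighborFinset] at hb
    refine ⟨⟨b, hb.2⟩, ?_, rfl⟩
    simp only [mem_neighborFinset, comap_adj, Function.Embedding.coe_subtype]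
    exact hb.1

lemma degree_induce_le (A : Finset W) (x : ↥(A : Set W)) :
    (T.induce (A : Set W)).degree x ≤ T.degree x.1 := by
  rw [degree_induce_eq_filter, degree]
  exact Finset.card_filter_le _ _

lemma degree_induce_eq_of_closed (A : Finset W)
    (hcl : ∀ u v, u ∈ A → T.Adj u v → v ∈ A) (x : ↥(A : Set W)) :
    (T.induce (A : Set W)).degree x = T.degree x.1 := by
  rw [degree_induce_eq_filter, degree]
  congr 1
  apply Finset.filter_true_of_mem
  intro y hy
  exact hcl x.1 y x.2 (by rwa [mem_neighborFinset] at hy)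

lemma induce_path_out {A : Set W} {a b : ↥A} (p : (T.induce A).Walk a b) (hp : p.IsPath) :
    ∃ q : T.Walk a.1 b.1, q.IsPath ∧ q.length = p.length := by
  refine ⟨p.map (Embedding.induce A).toHom, ?_, ?_⟩
  · exact p.map_isPath_of_injective Subtype.val_injective hp
  · exact Walk.length_map _ _

lemma induce_acyclic {A : Set W} (hac : T.IsAcyclic) : (T.induce A).IsAcyclic := by
  intro a p hp
  exact hac _ ((Walk.map_isCycle_iff_of_injective (f := (Embedding.induce A).toHom)
    Subtype.val_injective).mpr hp)

lemma two_nbrs_of_degree {v : W} (h : 2 ≤ T.degree v) :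
    ∃ x y, x ≠ y ∧ T.Adj v x ∧ T.Adj v y := by
  obtain ⟨x, hx, y, hy, hxy⟩ := Finset.one_lt_card.mp h
  exact ⟨x, y, hxy, (mem_neighborFinset _ _ _).mp hx, (mem_neighborFinset _ _ _).mp hy⟩

lemma degree_of_two_nbrs {v x y : W} (hxy : x ≠ y) (hx : T.Adj v x) (hy : T.Adj v y) :
    2 ≤ T.degree v :=
  Finset.one_lt_card.mpr ⟨x, (mem_neighborFinset _ _ _).mpr hx, y,
    (mem_neighborFinset _ _ _).mpr hy, hxy⟩

lemma uniq_nbr {x a b : W} (h : T.degree x ≤ 1) (ha : T.Adj x a) (hb : T.Adj x b) : a = b :=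
  Finset.card_le_one.mp h a ((mem_neighborFinset _ _ _).mpr ha) b ((mem_neighborFinset _ _ _).mpr hb)

lemma adj_of_length_one {u v : W} (p : T.Walk u v) (h : p.length = 1) : T.Adj u v := by
  cases p with
  | nil => simp at h
  | cons had q =>
    have : q.length = 0 := by simpa using h
    have := q.eq_of_length_eq_zero this
    exact this ▸ had

lemma exists_adj_of_ne {u y : W} (hconn : T.Preconnected) (h : u ≠ y) : ∃ z, T.Adj u z := by
  obtain ⟨w0⟩ := hconn u y
  obtain ⟨z, hz, q, -⟩ := Walk.exists_eq_cons_of_ne h w0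
  exact ⟨z, hz⟩

end InduceLemmas

lemma tree_card_le : ∀ (L : ℕ) (W : Type) [DecidableEq W] [Fintype W] (T : SimpleGraph W)
    [DecidableRel T.Adj] (d : ℕ), 2 ≤ d → T.Connected → T.IsAcyclic →
    (∀ w, T.degree w ≤ d) → (∀ (u v : W) (p : T.Walk u v), p.IsPath → p.length ≤ L) →
    Fintype.card W ≤ gfun d L + 1 := by
  intro L
  induction L using Nat.strong_induction_on with
  | _ L IH =>
  intro W _ _ T _ d hd hconn hac hdeg hpath
  match L with
  | 0 =>
    have : ∀ a b : W, a = b := by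
      intro a b
      obtain ⟨w0⟩ := hconn.preconnected a b
      have hp := w0.toPath
      have hlen := hpath _ _ hp.1 hp.2
      have : (hp.1 : T.Walk a b).length = 0 := by omega
      exact Walk.eq_of_length_eq_zero this
    calc Fintype.card W ≤ 1 := Fintype.card_le_one_iff.mpr this
    _ ≤ _ := by omega
  | 1 =>
    have hadj : ∀ u v : W, u ≠ v → T.Adj u v := by
      intro u v huv
      obtain ⟨w0⟩ := hconn.preconnected u v
      have hp := w0.toPath
      have hlen := hpath _ _ hp.1 hp.2
      have h0 : (hp.1 : T.Walk u v).length ≠ 0 := fun h => huv (Walk.eq_of_length_eq_zero h)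
      exact adj_of_length_one hp.1 (by omega)
    have hcard : Fintype.card W ≤ 2 := by
      by_contra hcon
      push_neg at hcon
      obtain ⟨a, b, c, hab, hac', hbc⟩ := Fintype.two_lt_card_iff.mp hcon
      have hlen := hpath _ _ (Walk.cons (hadj a b hab) (Walk.cons (hadj b c hbc) Walk.nil))
        (by rw [Walk.isPath_def]; simp [hab, hac', hbc])
      simp [Walk.length_cons] at hlen
    have : gfun d 1 = 1 := by simp [gfun]
    omega
  | (L+2) =>
    have hg1 : 1 ≤ gfun d (L+2) := gfun_pos d (by omega)
    by_cases hsmall : Fintype.card W ≤ 2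
    · omega
    push_neg at hsmall
    classical
    have htree : T.IsTree := ⟨hconn, hac⟩
    set W' : Finset W := Finset.univ.filter (fun w => 2 ≤ T.degree w) with hW'
    rcases Finset.eq_empty_or_nonempty W' with hWe | hWne
    · exfalso
      have hdeg1 : ∀ w : W, T.degree w ≤ 1 := by
        intro w
        by_contra hcon
        have : w ∈ W' := by simp [hW']; omega
        simp [hWe] at this
      have hsum : ∑ w, T.degree w = 2 * T.edgeFinset.card := T.sum_degrees_eq_twice_card_edges
      have hle : ∑ w, T.degree w ≤ Fintype.card W := by
        calc ∑ w, T.degree w ≤ ∑ _w : W, 1 := Finset.sum_le_sum (fun w _ => hdeg1 w)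
        _ = Fintype.card W := by simp
      have hE := htree.card_edgeFinset
      omega
    · set TA := T.induce (W' : Set W) with hTA
      have hmemW' : ∀ x : W, x ∈ W' ↔ 2 ≤ T.degree x := by intro x; simp [hW']
      have hconnA : TA.Connected := by
        rw [connected_iff]
        constructor
        · intro a b
          obtain ⟨w0⟩ := hconn.preconnected a.1 b.1
          have hp := w0.toPath
          have hsupp : ∀ x ∈ (hp.1 : T.Walk a.1 b.1).support, x ∈ (W' : Set W) := by
            intro x hx
            by_cases hxa : x = a.1
            · subst hxa; exact a.2
            by_cases hxb : x = b.1
            · subst hxb; exact b.2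
            obtain ⟨s1, s2, h12, hs1, hs2⟩ := internal_two_nbrs hp.1 hp.2 hx hxa hxb
            have h2x : 2 ≤ T.degree x := degree_of_two_nbrs h12 hs1 hs2
            simp only [Finset.coe_filter, hW', Set.mem_setOf_eq]
            simp [h2x]
          exact reach_induce (hp.1 : T.Walk a.1 b.1) hsupp a.2 b.2
        · obtain ⟨x, hx⟩ := hWne
          exact ⟨⟨x, hx⟩⟩
      have hacA : TA.IsAcyclic := induce_acyclic hac
      have hdegA : ∀ x, TA.degree x ≤ d := fun x => le_trans (degree_induce_le _ _) (hdeg _)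
      have hpathA : ∀ (a b) (p : TA.Walk a b), p.IsPath → p.length ≤ L := by
        intro a b p hp
        obtain ⟨q, hq, hlen⟩ := induce_path_out p hp
        have ha2 : 2 ≤ T.degree a.1 := (hmemW' a.1).mp a.2
        have hb2 : 2 ≤ T.degree b.1 := (hmemW' b.1).mp b.2
        obtain ⟨s, t, r, hr, hrlen⟩ := extend2 hac q hq (two_nbrs_of_degree ha2)
          (two_nbrs_of_degree hb2)
        have := hpath _ _ r hr
        omega
      have hcardA := IH L (by omega) ↥((W' : Set W)) TA d hd hconnA hacA hdegA hpathA
      have hcardA' : Fintype.card ↥((W' : Set W)) = W'.card := Fintype.card_coe W'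
      have htreeA : TA.IsTree := ⟨hconnA, hacA⟩
      have heA := htreeA.card_edgeFinset
      set eA := TA.edgeFinset.card with heAdef
      have hsumA : ∑ x, TA.degree x = 2 * eA := TA.sum_degrees_eq_twice_card_edges
      have hsumA' : ∑ y ∈ W', ((T.neighborFinset y).filter (· ∈ W')).card = 2 * eA := by
        rw [← hsumA, ← Finset.sum_coe_sort W']
        apply Finset.sum_congr rfl
        intro x _
        exact (degree_induce_eq_filter W' x).symm
      have hdegpos : ∀ w : W, 0 < T.degree w := by
        intro w
        obtain ⟨y, hy⟩ := Fintype.exists_ne_of_one_lt_card (by omega) w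
        obtain ⟨z, hz⟩ := exists_adj_of_ne hconn.preconnected (Ne.symm hy)
        exact (T.degree_pos_iff_exists_adj w).mpr ⟨z, hz⟩
      have hex : ∀ x : W, ∃ z, T.Adj x z := fun x => (T.degree_pos_iff_exists_adj x).mp (hdegpos x)
      choose nbr hnbr using hex
      set Lf : Finset W := Finset.univ.filter (fun w => ¬ 2 ≤ T.degree w) with hLf
      have hcardsplit : W'.card + Lf.card = Fintype.card W := by
        rw [hW', hLf, Finset.card_filter_add_card_filter_not, Finset.card_univ]
      -- each leaf's unique neighbor has degree ≥ 2
      have hLfW' : ∀ x ∈ Lf, nbr x ∈ W' := by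
        intro x hx
        have hxdeg : T.degree x ≤ 1 := by
          have := (Finset.mem_filter.mp hx).2
          omega
        rw [hmemW']
        by_contra hy
        push_neg at hy
        have hydeg : T.degree (nbr x) ≤ 1 := by omega
        have hall : ∀ z : W, z = x ∨ z = nbr x := by
          intro z
          obtain ⟨w0⟩ := hconn.preconnected x z
          obtain ⟨p, hpp⟩ := w0.toPath
          cases p with
          | nil => left; rfl
          | cons h1 q =>
            rename_i c₁
            have hc1 : c₁ = nbr x := uniq_nbr hxdeg h1 (hnbr x)
            subst hc1
            cases q with
            | nil => right; rfl
            | cons h2 q2 =>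
              rename_i c₂
              have hc2 : c₂ = x := uniq_nbr hydeg h2 (hnbr x).symm
              subst hc2
              exfalso
              rw [Walk.cons_isPath_iff] at hpp
              exact hpp.2 (by simp)
        exfalso
        have : (Finset.univ : Finset W) ⊆ {x, nbr x} := fun z _ => by
          rcases hall z with h | h <;> simp [h]
        have := Finset.card_le_card this
        have h2 : ({x, nbr x} : Finset W).card ≤ 2 := Finset.card_insert_le _ _ |>.trans (by simp)
        rw [Finset.card_univ] at this
        omega
      have hfib : ∀ y ∈ W', (Lf.filter (fun x => nbr x = y)).card
          + ((T.neighborFinset y).filter (· ∈ W')).card ≤ d := by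
        intro y hy
        have hsub : Lf.filter (fun x => nbr x = y) ∪ (T.neighborFinset y).filter (· ∈ W')
            ⊆ T.neighborFinset y := by
          intro z hz
          rcases Finset.mem_union.mp hz with hz | hz
          · obtain ⟨hzl, hze⟩ := Finset.mem_filter.mp hz
            rw [mem_neighborFinset]
            exact (hze ▸ hnbr z).symm
          · exact Finset.filter_subset _ _ hz
        have hdisj : Disjoint (Lf.filter (fun x => nbr x = y))
            ((T.neighborFinset y).filter (· ∈ W')) := by
          rw [Finset.disjoint_left]
          intro z hz1 hz2
          have hzl : z ∈ Lf := Finset.mem_filter.mp hz1 |>.1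
          have hzw : z ∈ W' := (Finset.mem_filter.mp hz2).2
          have h1 := (Finset.mem_filter.mp hzl).2
          have h2 := (hmemW' z).mp hzw
          omega
        calc (Lf.filter (fun x => nbr x = y)).card + ((T.neighborFinset y).filter (· ∈ W')).card
            = (Lf.filter (fun x => nbr x = y) ∪ (T.neighborFinset y).filter (· ∈ W')).card :=
              (Finset.card_union_of_disjoint hdisj).symm
          _ ≤ (T.neighborFinset y).card := Finset.card_le_card hsub
          _ ≤ d := hdeg y
      have hLfcard : Lf.card = ∑ y ∈ W', (Lf.filter (fun x => nbr x = y)).card :=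
        Finset.card_eq_sum_card_fiberwise hLfW'
      have hbig : Lf.card + 2 * eA ≤ d * W'.card := by
        rw [hLfcard, ← hsumA', ← Finset.sum_add_distrib]
        calc ∑ y ∈ W', ((Lf.filter (fun x => nbr x = y)).card
              + ((T.neighborFinset y).filter (· ∈ W')).card)
            ≤ ∑ _y ∈ W', d := Finset.sum_le_sum hfib
          _ = d * W'.card := by rw [Finset.sum_const, smul_eq_mul, mul_comm]
      rw [hcardA'] at hcardA heA
      set a := d - 1 with ha
      have hda : d = a + 1 := by omega
      have hgf := gfun_rec d L
      have hWcard : W'.card = eA + 1 := by omega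
      have heAle : eA ≤ gfun d L := by omega
      have hprod : d * W'.card = a * eA + (a + eA + 1) := by rw [hWcard, hda]; ring
      have hmono : a * eA ≤ a * gfun d L := Nat.mul_le_mul_left a heAle
      set P := a * gfun d L with hP
      set Q := a * eA with hQ
      omega

lemma forest_ineq : ∀ (N : ℕ) (W : Type) [DecidableEq W] [Fintype W] (T : SimpleGraph W)
    [DecidableRel T.Adj] (d L : ℕ), Fintype.card W ≤ N → 2 ≤ d → 1 ≤ L → T.IsAcyclic →
    (∀ w, T.degree w ≤ d) → (∀ (u v : W) (p : T.Walk u v), p.IsPath → p.length ≤ L) →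
    (gfun d L + 1) * (∑ w, T.degree w) ≤ 2 * gfun d L * Fintype.card W := by
  intro N
  induction N using Nat.strong_induction_on with
  | _ N IH =>
  intro W _ _ T _ d L hN hd hL hac hdeg hpath
  rcases isEmpty_or_nonempty W with hW | hW
  · rw [Finset.univ_eq_empty, Finset.sum_empty]
    simp
  classical
  obtain ⟨w0⟩ := hW
  set A : Finset W := Finset.univ.filter (fun w => T.Reachable w0 w) with hA
  have hmemA : ∀ x, x ∈ A ↔ T.Reachable w0 x := by intro x; simp [hA]
  have hw0A : w0 ∈ A := (hmemA w0).mpr (Reachable.refl w0)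
  have hclA : ∀ u v, u ∈ A → T.Adj u v → v ∈ A := by
    intro u v hu huv
    exact (hmemA v).mpr (((hmemA u).mp hu).trans huv.reachable)
  have hclB : ∀ u v, u ∈ Aᶜ → T.Adj u v → v ∈ Aᶜ := by
    intro u v hu huv
    rw [Finset.mem_compl] at hu ⊢
    intro hv
    exact hu (hclA v u hv huv.symm)
  set TA := T.induce (A : Set W) with hTA
  set TB := T.induce ((Aᶜ : Finset W) : Set W) with hTB
  have hconnA : TA.Connected := by
    rw [connected_iff]
    refine ⟨?_, ⟨⟨w0, hw0A⟩⟩⟩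
    intro a b
    have hra : T.Reachable w0 a.1 := (hmemA a.1).mp a.2
    have hrb : T.Reachable w0 b.1 := (hmemA b.1).mp b.2
    obtain ⟨wa⟩ := hra
    obtain ⟨wb⟩ := hrb
    have hw : T.Walk a.1 b.1 := wa.reverse.append wb
    refine reach_induce (wa.reverse.append wb) ?_ a.2 b.2
    intro x hx
    rw [Walk.support_append] at hx
    rcases List.mem_append.mp hx with hx | hx
    · rw [Walk.support_reverse, List.mem_reverse] at hx
      exact (hmemA x).mpr ⟨wa.takeUntil x hx⟩
    · have hx' : x ∈ wb.support := List.tail_subset _ hx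
      exact (hmemA x).mpr ⟨wb.takeUntil x hx'⟩
  have hacA : TA.IsAcyclic := induce_acyclic hac
  have hdegA : ∀ x, TA.degree x ≤ d := fun x => le_trans (degree_induce_le _ _) (hdeg _)
  have hpathA : ∀ (a b) (p : TA.Walk a b), p.IsPath → p.length ≤ L := by
    intro a b p hp
    obtain ⟨q, hq, hlen⟩ := induce_path_out p hp
    have := hpath _ _ q hq
    omega
  have hcardA := tree_card_le L ↥((A : Set W)) TA d hd hconnA hacA hdegA hpathA
  have hcardA' : Fintype.card ↥((A : Set W)) = A.card := Fintype.card_coe A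
  have htreeA : TA.IsTree := ⟨hconnA, hacA⟩
  have heA := htreeA.card_edgeFinset
  set eA := TA.edgeFinset.card with heAdef
  have hsumA : ∑ x, TA.degree x = 2 * eA := TA.sum_degrees_eq_twice_card_edges
  have hsumA' : ∑ y ∈ A, T.degree y = 2 * eA := by
    rw [← hsumA, ← Finset.sum_coe_sort A]
    exact Finset.sum_congr rfl (fun x _ => (degree_induce_eq_of_closed A hclA x).symm)
  -- the complement part
  have hacB : TB.IsAcyclic := induce_acyclic hac
  have hdegB : ∀ x, TB.degree x ≤ d := fun x => le_trans (degree_induce_le _ _) (hdeg _)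
  have hpathB : ∀ (a b) (p : TB.Walk a b), p.IsPath → p.length ≤ L := by
    intro a b p hp
    obtain ⟨q, hq, hlen⟩ := induce_path_out p hp
    have := hpath _ _ q hq
    omega
  have hcardB' : Fintype.card ↥((Aᶜ : Finset W) : Set W) = Aᶜ.card := Fintype.card_coe _
  have hsplit : A.card + Aᶜ.card = Fintype.card W := Finset.card_add_card_compl A
  have hApos : 1 ≤ A.card := Finset.card_pos.mpr ⟨w0, hw0A⟩
  have hIH := IH (N-1) (by omega) ↥((Aᶜ : Finset W) : Set W) TB d L (by omega) hd hL hacB hdegB hpathB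
  have hsumB' : ∑ y ∈ Aᶜ, T.degree y = ∑ x, TB.degree x := by
    rw [← Finset.sum_coe_sort Aᶜ]
    exact Finset.sum_congr rfl (fun x _ => (degree_induce_eq_of_closed Aᶜ hclB x).symm)
  have htotal : ∑ w, T.degree w = ∑ y ∈ A, T.degree y + ∑ y ∈ Aᶜ, T.degree y :=
    (Finset.sum_add_sum_compl A _).symm
  -- arithmetic
  set g := gfun d L with hg
  rw [hcardA'] at hcardA heA
  have heAle : eA ≤ g := by omega
  have hAcard : A.card = eA + 1 := by omega
  calc (g+1) * (∑ w, T.degree w)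
      = (g+1) * (2*eA) + (g+1) * (∑ x, TB.degree x) := by
        rw [htotal, hsumA', hsumB']; ring
    _ ≤ 2*g*A.card + 2*g*Aᶜ.card := by
        apply Nat.add_le_add
        · have h1 : (g+1)*(2*eA) = 2*(g*eA) + 2*eA := by ring
          have h2 : 2*g*A.card = 2*(g*eA) + 2*g := by rw [hAcard]; ring
          omega
        · rw [← hcardB']
          exact hIH
    _ = 2*g*(Fintype.card W) := by rw [← hsplit]; ring

section Spec
variable {V : Type} [Fintype V] (G : SimpleGraph V) (isVar : V → Prop)

/-- the degree-2 variable nodes -/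
def Dset : Set V := {v | isVar v ∧ degG G v = 2}

/-- the "chain graph" on check nodes: two check nodes are adjacent if some degree-2
variable node is adjacent to both. -/
def Hgr : SimpleGraph {c : V // ¬ isVar c} :=
  SimpleGraph.fromRel (fun a b => ∃ v ∈ Dset G isVar, G.Adj v a.1 ∧ G.Adj v b.1)

variable {G isVar}

lemma Hadj_iff {a b : {c : V // ¬ isVar c}} :
    (Hgr G isVar).Adj a b ↔ a ≠ b ∧ ∃ v ∈ Dset G isVar, G.Adj v a.1 ∧ G.Adj v b.1 := by
  rw [Hgr, fromRel_adj]
  constructor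
  · rintro ⟨hne, h | h⟩
    · exact ⟨hne, h⟩
    · obtain ⟨v, hv, h1, h2⟩ := h
      exact ⟨hne, v, hv, h2, h1⟩
  · rintro ⟨hne, h⟩
    exact ⟨hne, Or.inl h⟩

lemma degG_eq_card [DecidableRel G.Adj] (v : V) : degG G v = (G.neighborFinset v).card := by
  rw [degG, neighborFinset_def, Set.ncard_eq_toFinset_card']

lemma Dspec (hbip : Bipartite G isVar) {v : V} (hv : v ∈ Dset G isVar) :
    ∃ c1 c2 : V, c1 ≠ c2 ∧ ¬ isVar c1 ∧ ¬ isVar c2 ∧ G.neighborSet v = {c1, c2} := by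
  obtain ⟨c1, c2, hne, hset⟩ := Set.ncard_eq_two.mp hv.2
  have h1 : G.Adj v c1 := by rw [← mem_neighborSet, hset]; simp
  have h2 : G.Adj v c2 := by rw [← mem_neighborSet, hset]; simp
  exact ⟨c1, c2, hne, (hbip v c1 h1).mp hv.1, (hbip v c2 h2).mp hv.1, hset⟩

lemma pair_eq {x y u w : V} (h : ({x,y} : Set V) = {u,w}) (hxy : x ≠ y) :
    (x = u ∧ y = w) ∨ (x = w ∧ y = u) := by
  have hx : x ∈ ({u,w} : Set V) := h ▸ (by simp)
  have hy : y ∈ ({u,w} : Set V) := h ▸ (by simp)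
  have hu : u ∈ ({x,y} : Set V) := h ▸ (by simp)
  simp only [Set.mem_insert_iff, Set.mem_singleton_iff] at hx hy hu
  rcases hx with rfl | rfl
  · rcases hy with rfl | rfl
    · rcases hu with h' | h' <;> simp_all
    · left; exact ⟨rfl, rfl⟩
  · rcases hy with rfl | rfl
    · right; exact ⟨rfl, rfl⟩
    · rcases hu with h' | h' <;> simp_all

lemma nbrs_eq (hbip : Bipartite G isVar) {v a b : V} (hv : v ∈ Dset G isVar)
    (ha : G.Adj v a) (hb : G.Adj v b) (hab : a ≠ b) : G.neighborSet v = {a, b} := by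
  obtain ⟨c1, c2, hne, -, -, hset⟩ := Dspec hbip hv
  have ha' : a ∈ ({c1, c2} : Set V) := hset ▸ ha
  have hb' : b ∈ ({c1, c2} : Set V) := hset ▸ hb
  rw [hset]
  simp only [Set.mem_insert_iff, Set.mem_singleton_iff] at ha' hb'
  rcases ha' with rfl | rfl <;> rcases hb' with rfl | rfl
  · exact absurd rfl hab
  · rfl
  · exact Set.pair_comm _ _
  · exact absurd rfl hab

lemma third_nbr (hbip : Bipartite G isVar) {v a b c : V} (hv : v ∈ Dset G isVar)
    (ha : G.Adj v a) (hb : G.Adj v b) (hab : a ≠ b) (hc : G.Adj v c) : c = a ∨ c = b := by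
  have := nbrs_eq hbip hv ha hb hab
  have hcm : c ∈ G.neighborSet v := hc
  rw [this] at hcm
  simpa using hcm

end Spec

section Lift
variable {V : Type} [Fintype V] {G : SimpleGraph V} {isVar : V → Prop}

lemma lift_path (hbip : Bipartite G isVar) :
    ∀ {a b : {c : V // ¬ isVar c}} (p : (Hgr G isVar).Walk a b), p.IsPath →
    ∃ q : G.Walk a.1 b.1, q.IsPath ∧ q.length = 2 * p.length ∧
      (∀ x ∈ q.support, isVar x → x ∈ Dset G isVar) ∧
      (∀ x ∈ q.support, ¬ isVar x → ∃ y, y ∈ p.support ∧ x = y.1) ∧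
      (∀ x ∈ q.support, isVar x → ∃ y z, s(y,z) ∈ p.edges ∧ G.Adj x y.1 ∧ G.Adj x z.1) := by
  intro a b p
  induction p with
  | nil =>
    rename_i u
    intro _
    refine ⟨Walk.nil, Walk.IsPath.nil, by simp, ?_, ?_, ?_⟩
    · intro x hx hvx
      simp only [Walk.support_nil, List.mem_singleton] at hx
      exact absurd (hx ▸ hvx) u.2
    · intro x hx _
      simp only [Walk.support_nil, List.mem_singleton] at hx
      exact ⟨u, by simp, hx⟩
    · intro x hx hvx
      simp only [Walk.support_nil, List.mem_singleton] at hx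
      exact absurd (hx ▸ hvx) u.2
  | cons h p ih =>
    rename_i a c b
    intro hp
    obtain ⟨hne, v, hv, hva, hvc⟩ := Hadj_iff.mp h
    have hpp : p.IsPath := hp.of_cons
    obtain ⟨q', hq', hlen, hinv1, hinv2, hinv3⟩ := ih hpp
    have hansupp : a ∉ p.support := ((Walk.cons_isPath_iff h p).mp hp).2
    have hac1 : a.1 ≠ c.1 := fun hh => hne (Subtype.ext hh)
    -- v not in the support of q'
    have hvq' : v ∉ q'.support := by
      intro hmem
      obtain ⟨y, z, hyz, hvy, hvz⟩ := hinv3 v hmem hv.1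
      have hyzadj : (Hgr G isVar).Adj y z := p.adj_of_mem_edges hyz
      have hyzne : y.1 ≠ z.1 := fun hh => hyzadj.ne (Subtype.ext hh)
      have hset1 := nbrs_eq hbip hv hva hvc hac1
      have hset2 := nbrs_eq hbip hv hvy hvz hyzne
      have hpair := pair_eq (hset1 ▸ hset2) hac1
      have : a ∈ p.support := by
        rcases hpair with ⟨h1, -⟩ | ⟨h1, -⟩
        · exact (Subtype.ext h1 : a = y) ▸ p.fst_mem_support_of_mem_edges hyz
        · exact (Subtype.ext h1 : a = z) ▸ p.snd_mem_support_of_mem_edges hyz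
      exact hansupp this
    -- a.1 not in the support of (cons hvc q')
    have hasupp : a.1 ∉ (Walk.cons hvc q').support := by
      rw [Walk.support_cons, List.mem_cons]
      rintro (hh | hh)
      · exact absurd (hh ▸ a.2) (by simpa using hv.1)
      · obtain ⟨y, hy, hay⟩ := hinv2 a.1 hh a.2
        exact hansupp ((Subtype.ext hay : a = y) ▸ hy)
    refine ⟨Walk.cons hva.symm (Walk.cons hvc q'), ?_, ?_, ?_, ?_, ?_⟩
    · exact (hq'.cons hvq').cons hasupp
    · simp [hlen]; ring
    · intro x hx hvx
      rw [Walk.support_cons, Walk.support_cons] at hx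
      simp only [List.mem_cons] at hx
      rcases hx with hh | hh | hh
      · exact absurd (hh ▸ hvx) a.2
      · exact hh ▸ hv
      · exact hinv1 x hh hvx
    · intro x hx hnvx
      rw [Walk.support_cons, Walk.support_cons] at hx
      simp only [List.mem_cons] at hx
      rcases hx with hh | hh | hh
      · exact ⟨a, by simp, hh⟩
      · exact absurd (hh ▸ hv.1) hnvx
      · obtain ⟨y, hy, hxy⟩ := hinv2 x hh hnvx
        exact ⟨y, by simp [hy], hxy⟩
    · intro x hx hvx
      rw [Walk.support_cons, Walk.support_cons] at hx
      simp only [List.mem_cons] at hx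
      rcases hx with hh | hh | hh
      · exact absurd (hh ▸ hvx) a.2
      · subst hh
        exact ⟨a, c, by simp, hva, hvc⟩
      · obtain ⟨y, z, hyz, h1, h2⟩ := hinv3 x hh hvx
        exact ⟨y, z, by simp [hyz], h1, h2⟩

end Lift

section Hprops
variable {V : Type} [Fintype V] {G : SimpleGraph V} {isVar : V → Prop} {k : ℕ}

lemma H_path_short (hbip : Bipartite G isVar) (hk : 2 ≤ k)
    (hchain : ∀ (c c' : V) (p : G.Walk c c'), p.IsPath → ¬ isVar c → ¬ isVar c' →
      (∀ v ∈ p.support, isVar v → degG G v = 2) → p.length < 2 * k) :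
    ∀ (a b : {c : V // ¬ isVar c}) (p : (Hgr G isVar).Walk a b), p.IsPath →
      p.length ≤ k - 1 := by
  intro a b p hp
  obtain ⟨q, hq, hlen, hinv1, -, -⟩ := lift_path hbip p hp
  have := hchain a.1 b.1 q hq a.2 b.2 (fun x hx hvx => (hinv1 x hx hvx).2)
  omega

lemma H_acyclic (hbip : Bipartite G isVar) (hk : 2 ≤ k)
    (hchain : ∀ (c c' : V) (p : G.Walk c c'), p.IsPath → ¬ isVar c → ¬ isVar c' →
      (∀ v ∈ p.support, isVar v → degG G v = 2) → p.length < 2 * k)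
    (hcyc : ∀ (u : V) (p : G.Walk u u), p.IsCycle →
      (∀ v ∈ p.support, isVar v → degG G v = 2) → 2 * k < p.length) :
    (Hgr G isVar).IsAcyclic := by
  intro a c hc
  cases c with
  | nil => exact Walk.IsCycle.not_of_nil hc
  | cons h p =>
    rename_i b
    rw [Walk.cons_isCycle_iff] at hc
    obtain ⟨hp, hne⟩ := hc
    obtain ⟨hab, v, hv, hva, hvb⟩ := Hadj_iff.mp h
    obtain ⟨q, hq, hlen, hinv1, hinv2, hinv3⟩ := lift_path hbip p hp
    have hlt := hchain b.1 a.1 q hq b.2 a.2 (fun x hx hvx => (hinv1 x hx hvx).2)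
    have hab1 : a.1 ≠ b.1 := fun hh => hab (Subtype.ext hh)
    -- v is not in the support of q
    have hvq : v ∉ q.support := by
      intro hmem
      obtain ⟨y, z, hyz, hvy, hvz⟩ := hinv3 v hmem hv.1
      have hyzadj : (Hgr G isVar).Adj y z := p.adj_of_mem_edges hyz
      have hyzne : y.1 ≠ z.1 := fun hh => hyzadj.ne (Subtype.ext hh)
      have hset1 := nbrs_eq hbip hv hva hvb hab1
      have hset2 := nbrs_eq hbip hv hvy hvz hyzne
      have hpair := pair_eq (hset1 ▸ hset2) hab1
      apply hne
      rcases hpair with ⟨h1, h2⟩ | ⟨h1, h2⟩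
      · rw [show s(a,b) = s(y,z) by rw [Subtype.ext h1, Subtype.ext h2]]
        exact hyz
      · rw [show s(a,b) = s(z,y) by rw [Subtype.ext h1, Subtype.ext h2]]
        rw [Sym2.eq_swap]
        exact hyz
    have hq2 : (Walk.cons hvb q).IsPath := hq.cons hvq
    have hnedge : s(a.1, v) ∉ (Walk.cons hvb q).edges := by
      rw [Walk.edges_cons, List.mem_cons]
      rintro (hh | hh)
      · rw [Sym2.eq_iff] at hh
        rcases hh with ⟨h1, h2⟩ | ⟨h1, h2⟩
        · exact absurd hv.1 (h1 ▸ a.2)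
        · exact hab1 h1
      · exact hvq (q.snd_mem_support_of_mem_edges hh)
    have hcycle : (Walk.cons (hva.symm : G.Adj a.1 v) (Walk.cons hvb q)).IsCycle := by
      rw [Walk.cons_isCycle_iff]
      exact ⟨hq2, hnedge⟩
    have hbig := hcyc a.1 _ hcycle ?vars
    case vars =>
      intro x hx hvx
      rw [Walk.support_cons, Walk.support_cons, List.mem_cons, List.mem_cons] at hx
      rcases hx with hh | hh | hh
      · exact absurd (hh ▸ hvx) a.2
      · exact (hh ▸ hv).2
      · exact (hinv1 x hh hvx).2
    simp only [Walk.length_cons] at hbig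
    omega

lemma H_deg [DecidableRel G.Adj] [Fintype {c : V // ¬ isVar c}] [DecidableRel (Hgr G isVar).Adj]
    (hbip : Bipartite G isVar) {dcmax : ℕ}
    (hdcub : ∀ c, ¬ isVar c → degG G c ≤ dcmax) :
    ∀ a, (Hgr G isVar).degree a ≤ dcmax := by
  intro a
  have hW : ∀ b, (Hgr G isVar).Adj a b →
      ∃ v, v ∈ Dset G isVar ∧ G.Adj v a.1 ∧ G.Adj v b.1 := by
    intro b hb
    obtain ⟨-, v, hv, h1, h2⟩ := Hadj_iff.mp hb
    exact ⟨v, hv, h1, h2⟩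
  classical
  set f : {c : V // ¬ isVar c} → V :=
    fun b => if hb : (Hgr G isVar).Adj a b then (hW b hb).choose else a.1 with hf
  have hprop : ∀ b (hb : (Hgr G isVar).Adj a b),
      f b ∈ Dset G isVar ∧ G.Adj (f b) a.1 ∧ G.Adj (f b) b.1 := by
    intro b hb
    simp only [hf, dif_pos hb]
    exact (hW b hb).choose_spec
  have hcard : ((Hgr G isVar).neighborFinset a).card ≤ (G.neighborFinset a.1).card := by
    apply Finset.card_le_card_of_injOn f
    · intro b hb
      rw [Finset.mem_coe, mem_neighborFinset] at hb
      rw [Finset.mem_coe, mem_neighborFinset]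
      exact ((hprop b hb).2.1).symm
    · intro b hb b' hb' heq
      rw [Finset.mem_coe, mem_neighborFinset] at hb hb'
      obtain ⟨hD, hva, hvb⟩ := hprop b hb
      obtain ⟨hD', hva', hvb'⟩ := hprop b' hb'
      rw [heq] at hD hva hvb
      have hne1 : a.1 ≠ b.1 := fun hh => (Hadj_iff.mp hb).1 (Subtype.ext hh)
      have hne1' : a.1 ≠ b'.1 := fun hh => (Hadj_iff.mp hb').1 (Subtype.ext hh)
      rcases third_nbr hbip hD' hva' hvb' hne1' hvb with hh | hh
      · exact absurd hh.symm hne1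
      · exact Subtype.ext hh
  calc (Hgr G isVar).degree a = ((Hgr G isVar).neighborFinset a).card := rfl
    _ ≤ (G.neighborFinset a.1).card := hcard
    _ = degG G a.1 := (degG_eq_card a.1).symm
    _ ≤ dcmax := hdcub a.1 a.2

lemma card_D_eq_edges [DecidableRel G.Adj] [Fintype {c : V // ¬ isVar c}]
    [DecidableRel (Hgr G isVar).Adj] [Fintype ↥(Dset G isVar)]
    [Fintype ((Hgr G isVar).edgeSet)]
    (hbip : Bipartite G isVar) (hk : 2 ≤ k)
    (hcyc : ∀ (u : V) (p : G.Walk u u), p.IsCycle →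
      (∀ v ∈ p.support, isVar v → degG G v = 2) → 2 * k < p.length) :
    (Dset G isVar).toFinset.card = (Hgr G isVar).edgeFinset.card := by
  classical
  have hex : ∀ v, v ∈ Dset G isVar → ∃ (c1 : {c : V // ¬ isVar c}) (c2 : {c : V // ¬ isVar c}),
      c1.1 ≠ c2.1 ∧ G.Adj v c1.1 ∧ G.Adj v c2.1 := by
    intro v hv
    obtain ⟨c1, c2, hne, h1, h2, hset⟩ := Dspec hbip hv
    have ha1 : G.Adj v c1 := by rw [← mem_neighborSet, hset]; simp
    have ha2 : G.Adj v c2 := by rw [← mem_neighborSet, hset]; simp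
    exact ⟨⟨c1, h1⟩, ⟨c2, h2⟩, hne, ha1, ha2⟩
  choose c1f c2f hne12 hadj1 hadj2 using hex
  apply Finset.card_bij (fun v hv => s(c1f v (Set.mem_toFinset.mp hv), c2f v (Set.mem_toFinset.mp hv)))
  · intro v hv
    rw [mem_edgeFinset, mem_edgeSet]
    set hv' := Set.mem_toFinset.mp hv
    rw [Hadj_iff]
    exact ⟨fun hh => hne12 v hv' (congrArg Subtype.val hh),
      v, hv', hadj1 v hv', hadj2 v hv'⟩
  · intro v hv v' hv' heq
    set hm := Set.mem_toFinset.mp hv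
    set hm' := Set.mem_toFinset.mp hv'
    by_contra hvv'
    -- the two pairs coincide; extract common adjacencies
    rw [Sym2.eq_iff] at heq
    have hadj : G.Adj v' (c1f v hm).1 ∧ G.Adj v' (c2f v hm).1 := by
      rcases heq with ⟨h1, h2⟩ | ⟨h1, h2⟩
      · exact ⟨h1.symm ▸ hadj1 v' hm', h2.symm ▸ hadj2 v' hm'⟩
      · exact ⟨h1.symm ▸ hadj2 v' hm', h2.symm ▸ hadj1 v' hm'⟩
    set x := (c1f v hm).1 with hx
    set y := (c2f v hm).1 with hy
    have hvx : G.Adj v x := hadj1 v hm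
    have hvy : G.Adj v y := hadj2 v hm
    have hv'x : G.Adj v' x := hadj.1
    have hv'y : G.Adj v' y := hadj.2
    have hxy : x ≠ y := hne12 v hm
    have hvvar : isVar v := hm.1
    have hv'var : isVar v' := hm'.1
    have hxnv : ¬ isVar x := (c1f v hm).2
    have hynv : ¬ isVar y := (c2f v hm).2
    have hxv' : x ≠ v' := fun hh => hxnv (hh ▸ hv'var)
    have hxv : x ≠ v := fun hh => hxnv (hh ▸ hvvar)
    have hyv' : y ≠ v' := fun hh => hynv (hh ▸ hv'var)
    have hyv : y ≠ v := fun hh => hynv (hh ▸ hvvar)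
    have hpth : (Walk.cons hv'x.symm (Walk.cons hv'y (Walk.cons hvy.symm Walk.nil))).IsPath := by
      have hv'y : v' ≠ y := Ne.symm hyv'
      have hv'v : v' ≠ v := fun h => hvv' h.symm
      rw [Walk.isPath_def]
      simp [hxv', hxy, hxv, hv'y, hv'v, hyv]
    have hcycle : (Walk.cons hvx
        (Walk.cons hv'x.symm (Walk.cons hv'y (Walk.cons hvy.symm Walk.nil)))).IsCycle := by
      rw [Walk.cons_isCycle_iff]
      refine ⟨hpth, ?_⟩
      simp only [Walk.edges_cons, Walk.edges_nil, List.mem_cons, List.not_mem_nil, or_false]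
      rintro (hh | hh | hh) <;> rw [Sym2.eq_iff] at hh <;>
        rcases hh with ⟨h1, h2⟩ | ⟨h1, h2⟩
      · exact hxv h1.symm
      · exact hvv' h1
      · exact hvv' h1
      · exact hyv h1.symm
      · exact hyv h1.symm
      · exact hxy h2
    have hbig := hcyc v _ hcycle ?vars
    case vars =>
      intro z hz hvz
      simp only [Walk.support_cons, Walk.support_nil, List.mem_cons,
        List.not_mem_nil, or_false, List.mem_singleton] at hz
      rcases hz with rfl | rfl | rfl | rfl | rfl
      · exact hm.2
      · exact absurd hvz hxnv
      · exact hm'.2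
      · exact absurd hvz hynv
      · exact hm.2
    simp only [Walk.length_cons, Walk.length_nil] at hbig
    omega
  · intro e he
    induction e using Sym2.ind with
    | _ a b =>
      rw [mem_edgeFinset, mem_edgeSet] at he
      obtain ⟨hab, v, hv, hva, hvb⟩ := Hadj_iff.mp he
      refine ⟨v, Set.mem_toFinset.mpr hv, ?_⟩
      set hm := Set.mem_toFinset.mp (Set.mem_toFinset.mpr hv)
      have hab1 : a.1 ≠ b.1 := fun hh => hab (Subtype.ext hh)
      have hset1 := nbrs_eq hbip hv hva hvb hab1
      have hset2 := nbrs_eq hbip hv (hadj1 v hm) (hadj2 v hm) (hne12 v hm)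
      have hpair := pair_eq (hset1 ▸ hset2) hab1
      rcases hpair with ⟨h1, h2⟩ | ⟨h1, h2⟩
      · rw [show a = c1f v hm from Subtype.ext h1, show b = c2f v hm from Subtype.ext h2]
      · rw [show a = c2f v hm from Subtype.ext h1, show b = c1f v hm from Subtype.ext h2,
          Sym2.eq_swap]

/-- **Theorem 1.** Let `m` be the number of check nodes, `n_{v2}` the
number of degree-2 variable nodes, `d_{c,max} ≥ 2` the maximum check-node degree, and
`k ≥ 2` an integer. If `G` has no 2-chain of length `2k` or larger (a 2-chain is a path
between two check nodes all of whose variable nodes have degree 2) and no 2-cycle of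
length at most `2k` (a 2-cycle is a cycle all of whose variable nodes have degree 2),
then `m ≥ n_{v2} (1 + 1/Σ_{i=0}^{k−2} (d_{c,max}−1)^{⌊(i+1)/2⌋})`. -/
theorem stmt15 {V : Type} [Fintype V] (G : SimpleGraph V) (isVar : V → Prop)
    (hbip : Bipartite G isVar)
    (m n2 dcmax k : ℕ) (hk : 2 ≤ k) (hdc2 : 2 ≤ dcmax)
    (hm : m = {c | ¬ isVar c}.ncard)
    (hn2 : n2 = {v | isVar v ∧ degG G v = 2}.ncard)
    (hdcub : ∀ c, ¬ isVar c → degG G c ≤ dcmax)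
    (hdcatt : ∃ c, ¬ isVar c ∧ degG G c = dcmax)
    (hchain : ∀ (c c' : V) (p : G.Walk c c'), p.IsPath → ¬ isVar c → ¬ isVar c' →
      (∀ v ∈ p.support, isVar v → degG G v = 2) → p.length < 2 * k)
    (hcyc : ∀ (u : V) (p : G.Walk u u), p.IsCycle →
      (∀ v ∈ p.support, isVar v → degG G v = 2) → 2 * k < p.length) :
    (n2 : ℚ) * (1 + 1 / ∑ i ∈ Finset.range (k - 1), ((dcmax : ℚ) - 1) ^ ((i + 1) / 2))
      ≤ (m : ℚ) := by
  classical
  have hacy : (Hgr G isVar).IsAcyclic := H_acyclic hbip hk hchain hcyc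
  have hdegT : ∀ a, (Hgr G isVar).degree a ≤ dcmax := H_deg hbip hdcub
  have hpathT := H_path_short hbip hk hchain
  have hforest := forest_ineq (Fintype.card {c : V // ¬ isVar c}) {c : V // ¬ isVar c}
    (Hgr G isVar) dcmax (k-1) le_rfl hdc2 (by omega) hacy hdegT hpathT
  have hsum : ∑ w, (Hgr G isVar).degree w = 2 * (Hgr G isVar).edgeFinset.card :=
    (Hgr G isVar).sum_degrees_eq_twice_card_edges
  have hedge : (Dset G isVar).toFinset.card = (Hgr G isVar).edgeFinset.card :=
    card_D_eq_edges hbip hk hcyc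
  have hn2' : n2 = (Dset G isVar).toFinset.card := by
    rw [hn2, show {v | isVar v ∧ degG G v = 2} = Dset G isVar from rfl]
    exact Set.ncard_eq_toFinset_card' _
  have hm' : m = Fintype.card {c : V // ¬ isVar c} := by
    rw [hm, Set.ncard_eq_toFinset_card', Set.toFinset_card]
    exact Fintype.card_congr (Equiv.refl _)
  set S := gfun dcmax (k-1) with hS
  have key : (S + 1) * n2 ≤ S * m := by
    have h2 : 2 * ((S+1)*n2) ≤ 2 * (S*m) := by
      calc 2*((S+1)*n2) = (S+1)*(2*n2) := by ring
        _ = (S+1)*(2*(Hgr G isVar).edgeFinset.card) := by rw [hn2', hedge]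
        _ = (S+1)*(∑ w, (Hgr G isVar).degree w) := by rw [hsum]
        _ ≤ 2*S*(Fintype.card {c : V // ¬ isVar c}) := hforest
        _ = 2*(S*m) := by rw [hm']; ring
    omega
  have hS1 : 1 ≤ S := gfun_pos dcmax (by omega)
  have hcast : ((S : ℕ) : ℚ) = ∑ i ∈ Finset.range (k-1), ((dcmax:ℚ)-1)^((i+1)/2) := by
    rw [hS, gfun]
    push_cast [Nat.cast_sub (by omega : 1 ≤ dcmax)]
    ring
  have hSQ : (0:ℚ) < (S:ℚ) := by exact_mod_cast hS1
  rw [← hcast]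
  rw [show (1 + 1/(S:ℚ)) = ((S:ℚ)+1)/S from by field_simp]
  rw [mul_div_assoc', div_le_iff₀ hSQ]
  have keyQ : ((S:ℚ)+1) * (n2:ℚ) ≤ (S:ℚ) * (m:ℚ) := by exact_mod_cast key
  linarith
end Hprops
end

section
/- Let G = (L ∪ R, E) be a left-regular Tanner graph with left degree 2, let d_{c,max} be the maximum degree of a check node in G, and let k ≥ 2 be an integer. Let S ⊆ L be a set such that the induced subgraph G(S) is a tree whose longest path has 2k−2 edges. Then |S| ≤ Σ_{i=0}^{k−2} (d_{c,max}−1)^{⌊(i+1)/2⌋}. -/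
open SimpleGraph

open Finset in
open SimpleGraph Finset

private lemma walk_split {V : Type*} {G : SimpleGraph V} {u v : V} (p : G.Walk u v) :
    ∀ n, n ≤ p.length → ∃ (x : V) (q : G.Walk u x) (r : G.Walk x v),
      q.append r = p ∧ q.length = n := by
  induction p with
  | nil => intro n hn; exact ⟨_, .nil, .nil, rfl, by simp at hn ⊢; omega⟩
  | cons h p ih =>
    intro n hn
    cases n with
    | zero => exact ⟨_, .nil, .cons h p, rfl, rfl⟩
    | succ m =>
      obtain ⟨x, q, r, hqr, hq⟩ := ih m (by simpa using hn)
      exact ⟨x, .cons h q, r, by simp [hqr], by simp [hq]⟩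

private lemma walk_parity {V : Type*} {G : SimpleGraph V} (P : V → Prop)
    (hbip : ∀ a b, G.Adj a b → (P a ↔ ¬ P b)) {u v : V} (w : G.Walk u v) :
    (P u ↔ P v) ↔ Even w.length := by
  induction w with
  | nil => simp
  | cons h w ih =>
    have := hbip _ _ h
    simp only [Walk.length_cons, Nat.even_add_one, ← ih]
    tauto

private lemma getVert_one_takeUntil {V : Type*} [DecidableEq V] {G : SimpleGraph V} {u v w : V}
    (p : G.Walk u v) (h : w ∈ p.support) (hne : w ≠ u) :
    (p.takeUntil w h).getVert 1 = p.getVert 1 := by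
  have hspec := p.take_spec h
  have hlen : (p.takeUntil w h).length ≠ 0 := by
    intro h0
    exact hne (Walk.eq_of_length_eq_zero h0).symm
  conv_rhs => rw [← hspec]
  rw [Walk.getVert_append]
  rcases Nat.lt_or_ge 1 (p.takeUntil w h).length with hlt | hge
  · simp [hlt]
  · have h1 : (p.takeUntil w h).length = 1 := by omega
    simp [h1, ← Walk.getVert_length (p.takeUntil w h), h1]
open Finset

private lemma sum_pow_even (e M : ℕ) :
    ∑ i ∈ range (2*M+1), e^((i+1)/2) = 1 + ∑ i ∈ range M, 2 * e^(i+1) := by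
  induction M with
  | zero => simp
  | succ M ih =>
    have h1 : 2*(M+1)+1 = (2*M+1) + 1 + 1 := by ring
    conv_lhs => rw [h1, sum_range_succ, sum_range_succ, ih]
    conv_rhs => rw [sum_range_succ]
    have e1 : ((2*M+1)+1)/2 = M+1 := by omega
    have e2 : ((2*M+1+1)+1)/2 = M+1 := by omega
    rw [e1, e2]; ring

private lemma sum_pow_odd (d M : ℕ) :
    ∑ i ∈ range (M+1), d * (d-1)^i ≤ ∑ i ∈ range (2*M+2), (d-1)^((i+1)/2) := by
  induction M with
  | zero =>
    rw [range_one, sum_singleton, show (2:ℕ)*0+2 = 1+1 by rfl, sum_range_succ, range_one,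
      sum_singleton]
    simp only [pow_zero, mul_one]
    have : (1+1)/2 = 1 := by omega
    rw [this, pow_one, show ((0:ℕ)+1)/2 = 0 from rfl, pow_zero]; omega
  | succ M ih =>
    have key : d * (d-1)^(M+1) ≤ (d-1)^(M+1) + (d-1)^(M+2) := by
      have h : d ≤ 1 + (d-1) := by omega
      calc d * (d-1)^(M+1) ≤ (1 + (d-1)) * (d-1)^(M+1) := Nat.mul_le_mul_right _ h
        _ = (d-1)^(M+1) + (d-1)^(M+2) := by ring
    have e1 : ((2*M+2)+1)/2 = M+1 := by omega
    have e2 : ((2*M+2+1)+1)/2 = M+2 := by omega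
    calc ∑ i ∈ range (M+1+1), d * (d-1)^i
        = (∑ i ∈ range (M+1), d * (d-1)^i) + d * (d-1)^(M+1) := sum_range_succ _ _
      _ ≤ (∑ i ∈ range (2*M+2), (d-1)^((i+1)/2)) + ((d-1)^(M+1) + (d-1)^(M+2)) :=
          Nat.add_le_add ih key
      _ = ∑ i ∈ range (2*(M+1)+2), (d-1)^((i+1)/2) := by
          have h1 : 2*(M+1)+2 = (2*M+2) + 1 + 1 := by ring
          conv_rhs => rw [h1, sum_range_succ, sum_range_succ]
          rw [e1, e2]; ring

private lemma sum_even_levels (f : ℕ → ℕ) (hf : ∀ i, f (2*i+1) = 0) (M : ℕ) :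
    ∑ j ∈ range (2*M+2), f j = ∑ i ∈ range (M+1), f (2*i) := by
  induction M with
  | zero =>
    have h0 : f 1 = 0 := by have := hf 0; norm_num at this; exact this
    simp [sum_range_succ, h0]
  | succ M ih =>
    have h1 : 2*(M+1)+2 = (2*M+2) + 1 + 1 := by ring
    conv_lhs => rw [h1, sum_range_succ, sum_range_succ, ih]
    conv_rhs => rw [sum_range_succ]
    have z : f (2*M+2+1) = 0 := by
      have : 2*M+2+1 = 2*(M+1)+1 := by ring
      rw [this, hf]
    have e2 : (2*M+2 : ℕ) = 2*(M+1) := by ring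
    rw [z, e2, Nat.add_zero]

private lemma sum_odd_levels (f : ℕ → ℕ) (hf : ∀ i, f (2*i) = 0) (M : ℕ) :
    ∑ j ∈ range (2*M+3), f j = ∑ i ∈ range (M+1), f (2*i+1) := by
  induction M with
  | zero =>
    have h0 : f 0 = 0 := by have := hf 0; norm_num at this; exact this
    have h2 : f 2 = 0 := by have := hf 1; norm_num at this; exact this
    simp [sum_range_succ, h0, h2]
  | succ M ih =>
    have h1 : 2*(M+1)+3 = (2*M+3) + 1 + 1 := by ring
    conv_lhs => rw [h1, sum_range_succ, sum_range_succ, ih]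
    conv_rhs => rw [sum_range_succ]
    have z : f (2*M+3+1) = 0 := by
      have : 2*M+3+1 = 2*(M+2) := by ring
      rw [this, hf]
    have e2 : (2*M+3 : ℕ) = 2*(M+1)+1 := by ring
    rw [z, e2, Nat.add_zero]

open Finset in
private lemma master {X : Type} [Fintype X] (H : SimpleGraph X) (P : X → Prop)
    (hbip : ∀ a b, H.Adj a b → (P a ↔ ¬ P b))
    (hvar2 : ∀ a, P a → (H.neighborSet a).ncard = 2)
    {d k : ℕ} (hk : 2 ≤ k)
    (hchk : ∀ a, ¬ P a → (H.neighborSet a).ncard ≤ d)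
    (htree : H.IsTree)
    (hlong : ∃ u v, ∃ p : H.Walk u v, p.IsPath ∧ p.length = 2*k-2)
    (hmax : ∀ u v (p : H.Walk u v), p.IsPath → p.length ≤ 2*k-2) :
    {a | P a}.ncard ≤ ∑ i ∈ Finset.range (k-1), (d-1)^((i+1)/2) := by
  classical
  obtain ⟨u, v, p, hp, hpl⟩ := hlong
  have hcon := htree.isConnected
  have uniq := htree.existsUnique_path
  have pathlen : ∀ {a b : X} (q : H.Walk a b), q.IsPath → q.length = H.dist a b := by
    intro a b q hq
    obtain ⟨r, hr, hrl⟩ := (hcon.preconnected a b).exists_path_of_dist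
    rw [(uniq a b).unique hq hr, hrl]
  -- split the long path in the middle
  obtain ⟨x, q0, r0, hq0r0, hq0len⟩ := walk_split p (k-1) (by omega)
  have hq0path : q0.IsPath := by
    rw [← hq0r0] at hp; exact hp.of_append_left
  have hr0path : r0.IsPath := by
    rw [← hq0r0] at hp; exact hp.of_append_right
  have hr0len : r0.length = k-1 := by
    have := congrArg Walk.length hq0r0
    rw [Walk.length_append] at this
    omega
  -- endpoint u is a "check" node
  have hPu : ¬ P u := by
    intro hPu
    have hdeg := hvar2 u hPu
    have hplen1 : 1 ≤ p.length := by omega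
    have hadj1 : H.Adj u (p.getVert 1) := by
      simpa using p.adj_getVert_succ (by omega : 0 < p.length)
    obtain ⟨w, hwmem, hwne⟩ :=
      Set.exists_ne_of_one_lt_ncard (by omega : 1 < (H.neighborSet u).ncard) (p.getVert 1)
    have hw : H.Adj u w := hwmem
    have hwsup : w ∉ p.support := by
      intro hmem
      have ht := hp.takeUntil hmem
      have h1 : (Walk.cons hw .nil : H.Walk u w).IsPath := by simp [hw.ne]
      have heq := (uniq u w).unique h1 ht
      have hl : (p.takeUntil w hmem).length = 1 := by rw [← heq]; simp
      have hg : p.getVert 1 = w := by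
        conv_lhs => rw [← p.take_spec hmem]
        rw [Walk.getVert_append, hl]
        simp
      exact hwne hg.symm
    have hext : (Walk.cons hw.symm p).IsPath := hp.cons hwsup
    have := hmax _ _ _ hext
    rw [Walk.length_cons, hpl] at this
    omega
  have hEvenx : ∀ a, ((P x ↔ P a) ↔ Even (H.dist x a)) := by
    intro a
    obtain ⟨q, hq, hql⟩ := (hcon.preconnected x a).exists_path_of_dist
    rw [← hql]; exact walk_parity P hbip q
  have hdux : H.dist u x = k - 1 := by rw [← pathlen q0 hq0path, hq0len]
  have hPx : P x ↔ ¬ Even (k-1) := by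
    have := walk_parity P hbip q0
    rw [hq0len] at this
    tauto
  -- eccentricity of the center is at most k-1
  have hecc : ∀ y, H.dist x y ≤ k - 1 := by
    intro y
    by_cases h0 : H.dist x y = 0
    · omega
    obtain ⟨qy, hqy, hqyl⟩ := (hcon.preconnected x y).exists_path_of_dist
    have hkey : ∀ (e : X) (s : H.Walk x e), s.IsPath → s.length = k-1 →
        s.getVert 1 ≠ qy.getVert 1 → H.dist x y ≤ k-1 := by
      intro e s hs hsl hne
      have hdisj : ∀ z ∈ s.support, z ∉ qy.support.tail := by
        intro z hz1 hz2
        have hndqy := (Walk.isPath_def _).mp hqy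
        have hzx : z ≠ x := by
          intro h; subst h
          rw [qy.support_eq_cons] at hndqy
          exact (List.nodup_cons.mp hndqy).1 hz2
        have hz2' : z ∈ qy.support := by
          rw [qy.support_eq_cons]; exact List.mem_cons_of_mem _ hz2
        have heq := (uniq x z).unique (hs.takeUntil hz1) (hqy.takeUntil hz2')
        have g1 := getVert_one_takeUntil s hz1 hzx
        have g2 := getVert_one_takeUntil qy hz2' hzx
        rw [heq, g2] at g1
        exact hne g1.symm
      have hww : (s.reverse.append qy).IsPath := by
        rw [Walk.isPath_def, Walk.support_append]
        refine List.Nodup.append ((Walk.isPath_def _).mp hs.reverse) ?_ ?_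
        · have := (Walk.isPath_def _).mp hqy
          rw [qy.support_eq_cons] at this
          exact (List.nodup_cons.mp this).2
        · intro z hz1 hz2
          rw [Walk.support_reverse, List.mem_reverse] at hz1
          exact hdisj z hz1 hz2
      have := hmax _ _ _ hww
      rw [Walk.length_append, Walk.length_reverse, hsl, hqyl] at this
      omega
    have hss : (q0.reverse.getVert 1) ≠ (r0.getVert 1) := by
      intro he
      have hz1 : q0.reverse.getVert 1 ∈ q0.support := by
        have : q0.reverse.getVert 1 ∈ q0.reverse.support :=
          Walk.mem_support_iff_exists_getVert.mpr ⟨1, rfl, by rw [Walk.length_reverse]; omega⟩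
        rwa [Walk.support_reverse, List.mem_reverse] at this
      have hz2' : r0.getVert 1 ∈ r0.support :=
        Walk.mem_support_iff_exists_getVert.mpr ⟨1, rfl, by omega⟩
      have hzx : r0.getVert 1 ≠ x := by
        have hadj : H.Adj x (r0.getVert 1) := by
          simpa using r0.adj_getVert_succ (by omega : 0 < r0.length)
        exact hadj.ne'
      have hz2 : r0.getVert 1 ∈ r0.support.tail := by
        have := hz2'
        rw [r0.support_eq_cons] at this
        rcases List.mem_cons.mp this with h | h
        · exact absurd h hzx
        · exact h
      have hnd := (Walk.isPath_def _).mp hp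
      rw [← hq0r0, Walk.support_append] at hnd
      exact List.disjoint_of_nodup_append hnd (he ▸ hz1) hz2
    rcases eq_or_ne (q0.reverse.getVert 1) (qy.getVert 1) with h | h
    · refine hkey v r0 hr0path hr0len (fun hh => hss ?_)
      rw [h, hh]
    · exact hkey u q0.reverse hq0path.reverse (by rw [Walk.length_reverse, hq0len]) h
  -- the parent function towards the center x
  obtain ⟨par, hparadj, hpardist⟩ : ∃ par : X → X,
      (∀ y, H.dist x y ≠ 0 → H.Adj (par y) y) ∧
      (∀ y, H.dist x y ≠ 0 → H.dist x (par y) = H.dist x y - 1) := by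
    have hpth : ∀ y, ∃ q : H.Walk x y, q.IsPath ∧ q.length = H.dist x y :=
      fun y => (hcon.preconnected x y).exists_path_of_dist
    choose pth hpthpath hpthlen using hpth
    refine ⟨fun y => (pth y).getVert (H.dist x y - 1), ?_, ?_⟩
    · intro y hy
      have h1 : H.dist x y - 1 < (pth y).length := by rw [hpthlen]; omega
      have := (pth y).adj_getVert_succ h1
      have h2 : H.dist x y - 1 + 1 = (pth y).length := by rw [hpthlen]; omega
      rwa [h2, Walk.getVert_length] at this
    · intro y hy
      show H.dist x ((pth y).getVert (H.dist x y - 1)) = H.dist x y - 1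
      set b := (pth y).getVert (H.dist x y - 1) with hb
      have hmem : b ∈ (pth y).support :=
        Walk.mem_support_iff_exists_getVert.mpr ⟨H.dist x y - 1, rfl, by rw [hpthlen]; omega⟩
      have hub : H.dist x b ≤ H.dist x y := by
        rw [← pathlen _ ((hpthpath y).takeUntil hmem)]
        have := Walk.length_takeUntil_le (pth y) hmem
        rw [hpthlen] at this
        exact this
      have hadjb : H.Adj b y := by
        have h1 : H.dist x y - 1 < (pth y).length := by rw [hpthlen]; omega
        have := (pth y).adj_getVert_succ h1
        have h2 : H.dist x y - 1 + 1 = (pth y).length := by rw [hpthlen]; omega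
        rwa [h2, Walk.getVert_length] at this
      have hne : H.dist x b ≠ H.dist x y := by
        intro hEq
        have e1 := hEvenx b
        have e2 := hEvenx y
        rw [hEq] at e1
        have := hbip b y hadjb
        tauto
      have hlb : H.dist x y ≤ H.dist x b + 1 := by
        have h1 : H.dist b y ≤ 1 := dist_le (Walk.cons hadjb .nil)
        have := hcon.dist_triangle (u := x) (v := b) (w := y)
        omega
      omega
  -- level sets
  set Flev : ℕ → Finset X := fun j => Finset.univ.filter (fun a => H.dist x a = j) with hFlev
  have memF : ∀ (a : X) (j : ℕ), a ∈ Flev j ↔ H.dist x a = j := by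
    intro a j; simp [hFlev]
  have hF0 : (Flev 0).card = 1 := by
    have : Flev 0 = {x} := by
      ext a
      rw [memF]
      simp [hcon.dist_eq_zero_iff, eq_comm]
    rw [this, Finset.card_singleton]
  have hnbr : ∀ b : X, ∀ F : Finset X, (∀ a ∈ F, H.Adj b a) → F.card ≤ (H.neighborSet b).ncard := by
    intro b F hF
    rw [Set.ncard_eq_toFinset_card']
    apply Finset.card_le_card
    intro a ha
    rw [Set.mem_toFinset]
    exact hF a ha
  -- the key counting step
  have hstep : ∀ j m : ℕ,
      (∀ b ∈ Flev j, (H.neighborSet b).ncard ≤ m + (if j = 0 then 0 else 1)) →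
      (Flev (j+1)).card ≤ m * (Flev j).card := by
    intro j m hm
    apply Finset.card_le_mul_card_image_of_maps_to (f := par)
    · intro a ha
      rw [memF] at ha ⊢
      rw [hpardist a (by omega), ha]
      omega
    · intro b hb
      rcases Nat.eq_zero_or_pos j with hj | hj
      · subst hj
        have hcb : ∀ a ∈ {a ∈ Flev (0+1) | par a = b}, H.Adj b a := by
          intro a ha
          rw [Finset.mem_filter, memF] at ha
          have := hparadj a (by omega)
          rwa [ha.2] at this
        have := hnbr b _ hcb
        have hmb := hm b hb
        rw [if_pos rfl] at hmb
        omega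
      · have hbne : H.dist x b ≠ 0 := by rw [memF] at hb; omega
        have hsub : {a ∈ Flev (j+1) | par a = b} ⊆
            ((H.neighborSet b).toFinset).erase (par b) := by
          intro a ha
          rw [Finset.mem_filter, memF] at ha
          obtain ⟨ha1, ha2⟩ := ha
          rw [Finset.mem_erase, Set.mem_toFinset]
          constructor
          · intro hEq
            have h1 := hpardist b hbne
            rw [← hEq] at h1
            rw [memF] at hb
            omega
          · have := hparadj a (by omega)
            rwa [ha2] at this
        have hparbmem : par b ∈ (H.neighborSet b).toFinset := by
          rw [Set.mem_toFinset]
          exact ((hparadj b hbne).symm : H.Adj b (par b))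
        have h1 := Finset.card_le_card hsub
        rw [Finset.card_erase_of_mem hparbmem] at h1
        have h2 : (H.neighborSet b).toFinset.card = (H.neighborSet b).ncard :=
          (Set.ncard_eq_toFinset_card' _).symm
        have hmb := hm b hb
        rw [if_neg (by omega)] at hmb
        omega
  -- generic step lemmas
  have hstepVar : ∀ j, j ≠ 0 → (∀ a ∈ Flev j, P a) → (Flev (j+1)).card ≤ 1 * (Flev j).card := by
    intro j hj hP'
    apply hstep
    intro b hb
    rw [hvar2 b (hP' b hb), if_neg hj]
  have hstepChk : ∀ j, j ≠ 0 → (∀ a ∈ Flev j, ¬ P a) → (Flev (j+1)).card ≤ (d-1) * (Flev j).card := by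
    intro j hj hP'
    apply hstep
    intro b hb
    have := hchk b (hP' b hb)
    rw [if_neg hj]
    omega
  have hlevP : ∀ j a, a ∈ Flev j → (P a ↔ (Even j ↔ P x)) := by
    intro j a ha
    rw [memF] at ha
    have := hEvenx a
    rw [ha] at this
    tauto
  -- counting P-vertices fiberwise by distance
  set Vlev : ℕ → Finset X := fun j => Finset.univ.filter (fun a => P a ∧ H.dist x a = j)
    with hVlev
  have hVF : ∀ j, (Vlev j).card ≤ (Flev j).card := by
    intro j
    apply Finset.card_le_card
    intro a ha
    simp only [hVlev, hFlev, Finset.mem_filter] at ha ⊢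
    exact ⟨ha.1, ha.2.2⟩
  have hV0 : (Vlev 0).card ≤ 1 := by have := hVF 0; omega
  have hVcard : {a | P a}.ncard = ∑ j ∈ Finset.range k, (Vlev j).card := by
    have h1 : {a | P a}.ncard = (Finset.univ.filter P).card := by
      rw [Set.ncard_eq_toFinset_card']
      congr 1
      ext a
      simp
    rw [h1]
    have hmapsto : ∀ a ∈ Finset.univ.filter P, H.dist x a ∈ Finset.range k := by
      intro a _
      rw [Finset.mem_range]
      have := hecc a
      omega
    rw [Finset.card_eq_sum_card_fiberwise hmapsto]
    apply Finset.sum_congr rfl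
    intro j hj
    congr 1
    rw [Finset.filter_filter]
  rw [hVcard]
  by_cases hx : P x
  · -- the center is a variable node, k is even
    have hkodd : ¬ Even (k-1) := hPx.mp hx
    rw [Nat.even_iff] at hkodd
    obtain ⟨M, hM⟩ : ∃ M, k = 2*M+2 := ⟨k/2-1, by omega⟩
    have hzero : ∀ i, (Vlev (2*i+1)).card = 0 := by
      intro i
      rw [Finset.card_eq_zero, Finset.filter_eq_empty_iff]
      rintro a - ⟨hPa, hda⟩
      have := (hEvenx a).mp (iff_of_true hx hPa)
      rw [hda, Nat.even_iff] at this
      omega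
    have hF1 : (Flev 1).card ≤ 2 := by
      have h2 := hstep 0 2 (fun b hb => by
        rw [if_pos rfl, Nat.add_zero]
        have hbx : b = x := by
          rw [memF] at hb
          exact ((hcon.dist_eq_zero_iff).mp hb).symm
        rw [hbx, hvar2 x hx])
      rw [hF0] at h2
      simpa using h2
    have claim : ∀ i, (Flev (2*i+1)).card ≤ 2 * (d-1)^i ∧
        (Flev (2*i+2)).card ≤ 2 * (d-1)^(i+1) := by
      intro i
      induction i with
      | zero =>
        constructor
        · simpa using hF1
        · have hchk1 : ∀ a ∈ Flev 1, ¬ P a := by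
            intro a ha
            have := hlevP 1 a ha
            have h1 : ¬ Even 1 := by rw [Nat.even_iff]; omega
            tauto
          have := hstepChk 1 (by omega) hchk1
          calc (Flev 2).card ≤ (d-1) * (Flev 1).card := by simpa using this
            _ ≤ (d-1) * 2 := Nat.mul_le_mul_left _ hF1
            _ = 2 * (d-1)^(0+1) := by ring
      | succ i ih =>
        have hvar' : ∀ a ∈ Flev (2*i+2), P a := by
          intro a ha
          have := hlevP (2*i+2) a ha
          have he : Even (2*i+2) := by rw [Nat.even_iff]; omega
          tauto
        have h1 : (Flev (2*i+3)).card ≤ (Flev (2*i+2)).card := by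
          have := hstepVar (2*i+2) (by omega) hvar'
          simpa using this
        have hchk' : ∀ a ∈ Flev (2*i+3), ¬ P a := by
          intro a ha
          have := hlevP (2*i+3) a ha
          have he : ¬ Even (2*i+3) := by rw [Nat.even_iff]; omega
          tauto
        have h2 : (Flev (2*i+4)).card ≤ (d-1) * (Flev (2*i+3)).card := by
          have := hstepChk (2*i+3) (by omega) hchk'
          simpa using this
        constructor
        · have e1 : 2*(i+1)+1 = 2*i+3 := by ring
          rw [e1]
          calc (Flev (2*i+3)).card ≤ (Flev (2*i+2)).card := h1
            _ ≤ 2*(d-1)^(i+1) := ih.2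
        · have e1 : 2*(i+1)+2 = 2*i+4 := by ring
          rw [e1]
          calc (Flev (2*i+4)).card ≤ (d-1) * (Flev (2*i+3)).card := h2
            _ ≤ (d-1) * ((Flev (2*i+2)).card) := Nat.mul_le_mul_left _ h1
            _ ≤ (d-1) * (2*(d-1)^(i+1)) := Nat.mul_le_mul_left _ ih.2
            _ = 2 * (d-1)^(i+1+1) := by ring
    calc ∑ j ∈ Finset.range k, (Vlev j).card
        = ∑ i ∈ Finset.range (M+1), (Vlev (2*i)).card := by
          rw [hM]; exact sum_even_levels _ hzero M
      _ ≤ 1 + ∑ i ∈ Finset.range M, 2 * (d-1)^(i+1) := by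
          rw [Finset.sum_range_succ']
          have hb : ∀ i ∈ Finset.range M, (Vlev (2*(i+1))).card ≤ 2 * (d-1)^(i+1) := by
            intro i _
            have e1 : 2*(i+1) = 2*i+2 := by ring
            rw [e1]
            exact le_trans (hVF _) (claim i).2
          have := Finset.sum_le_sum hb
          have hg0 : (Vlev (2*0)).card ≤ 1 := by simpa using hV0
          omega
      _ = ∑ i ∈ Finset.range (2*M+1), (d-1)^((i+1)/2) := (sum_pow_even (d-1) M).symm
      _ = ∑ i ∈ Finset.range (k-1), (d-1)^((i+1)/2) := by rw [hM]; norm_num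
  · -- the center is a check node, k is odd
    have hkeven : Even (k-1) := by
      by_contra h
      exact hx (hPx.mpr h)
    rw [Nat.even_iff] at hkeven
    obtain ⟨M, hM⟩ : ∃ M, k = 2*M+3 := ⟨(k-3)/2, by omega⟩
    have hzero : ∀ i, (Vlev (2*i)).card = 0 := by
      intro i
      rw [Finset.card_eq_zero, Finset.filter_eq_empty_iff]
      rintro a - ⟨hPa, hda⟩
      have he : Even (H.dist x a) := by rw [hda]; exact even_two_mul i
      exact hx (((hEvenx a).mpr he).mpr hPa)
    have hF1 : (Flev 1).card ≤ d := by
      have h2 := hstep 0 d (fun b hb => by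
        rw [if_pos rfl, Nat.add_zero]
        have hbx : b = x := by
          rw [memF] at hb
          exact ((hcon.dist_eq_zero_iff).mp hb).symm
        rw [hbx]
        exact hchk x hx)
      rw [hF0] at h2
      simpa using h2
    have claim : ∀ i, (Flev (2*i+1)).card ≤ d * (d-1)^i := by
      intro i
      induction i with
      | zero => simpa using hF1
      | succ i ih =>
        have hvar' : ∀ a ∈ Flev (2*i+1), P a := by
          intro a ha
          have := hlevP (2*i+1) a ha
          have he : ¬ Even (2*i+1) := by rw [Nat.even_iff]; omega
          tauto
        have h1 : (Flev (2*i+2)).card ≤ (Flev (2*i+1)).card := by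
          have := hstepVar (2*i+1) (by omega) hvar'
          simpa using this
        have hchk' : ∀ a ∈ Flev (2*i+2), ¬ P a := by
          intro a ha
          have := hlevP (2*i+2) a ha
          have he : Even (2*i+2) := by rw [Nat.even_iff]; omega
          tauto
        have h2 : (Flev (2*i+3)).card ≤ (d-1) * (Flev (2*i+2)).card := by
          have := hstepChk (2*i+2) (by omega) hchk'
          simpa using this
        have e1 : 2*(i+1)+1 = 2*i+3 := by ring
        rw [e1]
        calc (Flev (2*i+3)).card ≤ (d-1) * (Flev (2*i+2)).card := h2
          _ ≤ (d-1) * (Flev (2*i+1)).card := Nat.mul_le_mul_left _ h1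
          _ ≤ (d-1) * (d * (d-1)^i) := Nat.mul_le_mul_left _ ih
          _ = d * (d-1)^(i+1) := by ring
    calc ∑ j ∈ Finset.range k, (Vlev j).card
        = ∑ i ∈ Finset.range (M+1), (Vlev (2*i+1)).card := by
          rw [hM]; exact sum_odd_levels _ hzero M
      _ ≤ ∑ i ∈ Finset.range (M+1), d * (d-1)^i :=
          Finset.sum_le_sum (fun i _ => le_trans (hVF _) (claim i))
      _ ≤ ∑ i ∈ Finset.range (2*M+2), (d-1)^((i+1)/2) := sum_pow_odd d M
      _ = ∑ i ∈ Finset.range (k-1), (d-1)^((i+1)/2) := by rw [hM]; norm_num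

/-- **Lemma on 2-chains.** Let `G` be a left-regular Tanner graph with
left degree 2, `d_{c,max}` the maximum check-node degree, `k ≥ 2`, and `S ⊆ L` a set
such that the induced subgraph `G(S)` is a tree whose longest path has `2k−2` edges.
Then `|S| ≤ Σ_{i=0}^{k−2} (d_{c,max}−1)^{⌊(i+1)/2⌋}`. -/
theorem stmt16 {V : Type} [Fintype V] (G : SimpleGraph V) (isVar : V → Prop)
    (hbip : Bipartite G isVar)
    (hreg : ∀ v, isVar v → degG G v = 2)
    (dcmax k : ℕ) (hk : 2 ≤ k)
    (hdcub : ∀ c, ¬ isVar c → degG G c ≤ dcmax)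
    (hdcatt : ∃ c, ¬ isVar c ∧ degG G c = dcmax)
    (S : Set V) (hSL : S ⊆ {v | isVar v})
    (htree : (G.induce (S ∪ Gam G S)).IsTree)
    (hlong : ∃ (u v : ↥(S ∪ Gam G S)) (p : (G.induce (S ∪ Gam G S)).Walk u v),
      p.IsPath ∧ p.length = 2 * k - 2)
    (hmaxlen : ∀ (u v : ↥(S ∪ Gam G S)) (p : (G.induce (S ∪ Gam G S)).Walk u v),
      p.IsPath → p.length ≤ 2 * k - 2) :
    S.ncard ≤ ∑ i ∈ Finset.range (k - 1), (dcmax - 1) ^ ((i + 1) / 2) := by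
  classical
  haveI : Fintype ↥(S ∪ Gam G S) := Fintype.ofFinite _
  set W := S ∪ Gam G S with hW
  set H := G.induce W with hHdef
  have hGamChk : ∀ c ∈ Gam G S, ¬ isVar c := by
    rintro c ⟨v, hv, hadj⟩
    exact (hbip v c hadj).mp (hSL hv)
  have hadjH : ∀ a b : ↥W, H.Adj a b ↔ G.Adj ↑a ↑b := by
    intro a b
    simp [hHdef]
  have hbip' : ∀ a b : ↥W, H.Adj a b → ((fun y : ↥W => isVar ↑y) a ↔ ¬ (fun y : ↥W => isVar ↑y) b) := by
    intro a b hab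
    exact hbip _ _ ((hadjH a b).mp hab)
  have hmemS : ∀ a : ↥W, isVar ↑a → ↑a ∈ S := by
    intro a ha
    rcases a.2 with h | h
    · exact h
    · exact absurd ha (hGamChk _ h)
  have himg : ∀ a : ↥W, ↑a ∈ S →
      Subtype.val '' (H.neighborSet a) = G.neighborSet (↑a : V) := by
    intro a haS
    ext c
    constructor
    · rintro ⟨b, hb, rfl⟩
      exact (hadjH a b).mp hb
    · intro hc
      have hcW : c ∈ W := Or.inr ⟨↑a, haS, hc⟩
      exact ⟨⟨c, hcW⟩, (hadjH a ⟨c, hcW⟩).mpr hc, rfl⟩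
  have hvar2' : ∀ a : ↥W, isVar ↑a → (H.neighborSet a).ncard = 2 := by
    intro a ha
    have haS := hmemS a ha
    have := himg a haS
    have h1 : (Subtype.val '' (H.neighborSet a)).ncard = (H.neighborSet a).ncard :=
      Set.ncard_image_of_injective _ Subtype.val_injective
    rw [this] at h1
    rw [← h1]
    exact hreg _ ha
  have hchk' : ∀ a : ↥W, ¬ isVar ↑a → (H.neighborSet a).ncard ≤ dcmax := by
    intro a ha
    have hsub : Subtype.val '' (H.neighborSet a) ⊆ G.neighborSet (↑a : V) := by
      rintro c ⟨b, hb, rfl⟩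
      exact (hadjH a b).mp hb
    have h1 : (Subtype.val '' (H.neighborSet a)).ncard = (H.neighborSet a).ncard :=
      Set.ncard_image_of_injective _ Subtype.val_injective
    calc (H.neighborSet a).ncard = (Subtype.val '' (H.neighborSet a)).ncard := h1.symm
      _ ≤ (G.neighborSet (↑a : V)).ncard := Set.ncard_le_ncard hsub (Set.toFinite _)
      _ ≤ dcmax := hdcub _ ha
  have hScard : S.ncard = {a : ↥W | isVar ↑a}.ncard := by
    have himg2 : Subtype.val '' {a : ↥W | isVar ↑a} = S := by
      ext s
      constructor
      · rintro ⟨a, ha, rfl⟩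
        exact hmemS a ha
      · intro hs
        exact ⟨⟨s, Or.inl hs⟩, hSL hs, rfl⟩
    rw [← himg2, Set.ncard_image_of_injective _ Subtype.val_injective]
  rw [hScard]
  exact master H (fun y : ↥W => isVar ↑y) hbip' hvar2' hk hchk' htree hlong hmaxlen
end

section
/- Let G = (L ∪ R, E) be a left-regular Tanner graph with left degree d_l ≥ 3 whose girth g satisfies g = 4k+2 for a positive integer k (so g > 4). Let S be an (a,b) elementary trapping set with connected induced subgraph G(S) such that b < a and d_l(d_l − 1) > b. Then a ≥ 1 + d_l + (d_l(d_l−1) − b) · Σ_{i=0}^{k−2} (d_l−1)^i, where the sum is empty (equal to 0) when k = 1. -/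
open SimpleGraph

private lemma concat_isPath' {V : Type} {G : SimpleGraph V} {u v w : V}
    {p : G.Walk u v} (hp : p.IsPath) (h : G.Adj v w) (hw : w ∉ p.support) :
    (p.concat h).IsPath := by
  rw [← Walk.isPath_reverse_iff, Walk.reverse_concat]
  exact (Walk.cons_isPath_iff _ _).mpr ⟨hp.reverse, by
    simpa [Walk.support_reverse] using hw⟩

private lemma cycle_bound {V : Type} {G : SimpleGraph V} {u v : V}
    {p q : G.Walk u v} (hp : p.IsPath) (hq : q.IsPath) (hne : p ≠ q) :
    ∃ (x : V) (c : G.Walk x x), c.IsCycle ∧ c.length ≤ p.length + q.length := by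
  classical
  set s : Set (Sym2 V) := {e | e ∈ p.edges ∨ e ∈ q.edges} with hs
  have hmem : ∀ (r : G.Walk u v), (∀ e ∈ r.edges, e ∈ s) →
      ∀ e ∈ r.edges, e ∈ (fromEdgeSet s).edgeSet := by
    intro r hr e he
    rw [edgeSet_fromEdgeSet]
    exact ⟨hr e he, G.not_isDiag_of_mem_edgeSet (r.edges_subset_edgeSet he)⟩
  have hps : ∀ e ∈ p.edges, e ∈ (fromEdgeSet s).edgeSet :=
    hmem p (fun e he => Or.inl he)
  have hqs : ∀ e ∈ q.edges, e ∈ (fromEdgeSet s).edgeSet :=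
    hmem q (fun e he => Or.inr he)
  set p' := p.transfer (fromEdgeSet s) hps with hp'def
  set q' := q.transfer (fromEdgeSet s) hqs with hq'def
  have hp' : p'.IsPath := hp.transfer _
  have hq' : q'.IsPath := hq.transfer _
  have hne' : p' ≠ q' := by
    intro heqq
    apply hne
    apply Walk.edges_injective
    rw [← Walk.edges_transfer p hps, ← Walk.edges_transfer q hqs, ← hp'def, ← hq'def, heqq]
  have hnA : ¬ (fromEdgeSet s).IsAcyclic := by
    intro hA
    exact hne' (congrArg Subtype.val
      (isAcyclic_iff_path_unique.mp hA ⟨p', hp'⟩ ⟨q', hq'⟩))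
  rw [IsAcyclic] at hnA
  push_neg at hnA
  obtain ⟨x, c, hc⟩ := hnA
  -- map cycle into G
  have hle : fromEdgeSet s ≤ G := by
    intro a b hab
    rw [fromEdgeSet_adj] at hab
    rcases hab.1 with h | h
    · exact p.adj_of_mem_edges h
    · exact q.adj_of_mem_edges h
  refine ⟨x, c.mapLe hle, hc.mapLe hle, ?_⟩
  have hlen : (c.mapLe hle).length = c.length := by
    simp [Walk.mapLe]
  rw [hlen]
  -- bound the length of c
  have hnd : c.edges.Nodup := hc.edges_nodup
  have hsub : c.edges.toFinset ⊆ p.edges.toFinset ∪ q.edges.toFinset := by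
    intro e he
    rw [List.mem_toFinset] at he
    have := c.edges_subset_edgeSet he
    rw [edgeSet_fromEdgeSet] at this
    rcases this.1 with h | h
    · exact Finset.mem_union_left _ (List.mem_toFinset.mpr h)
    · exact Finset.mem_union_right _ (List.mem_toFinset.mpr h)
  calc c.length = c.edges.length := (c.length_edges).symm
    _ = c.edges.toFinset.card := (List.toFinset_card_of_nodup hnd).symm
    _ ≤ (p.edges.toFinset ∪ q.edges.toFinset).card := Finset.card_le_card hsub
    _ ≤ p.edges.toFinset.card + q.edges.toFinset.card := Finset.card_union_le _ _
    _ ≤ p.edges.length + q.edges.length :=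
        Nat.add_le_add (List.toFinset_card_le _) (List.toFinset_card_le _)
    _ = p.length + q.length := by rw [p.length_edges, q.length_edges]

private lemma walk_parity_s17 {W : Type} {H : SimpleGraph W} {isv : W → Prop}
    (hbip : ∀ u w, H.Adj u w → (isv u ↔ ¬ isv w)) :
    ∀ {u w : W} (p : H.Walk u w), ((isv u ↔ isv w) ↔ Even p.length) := by
  intro u w p
  induction p with
  | nil => simp
  | @cons u u' w h q ih =>
    have h1 := hbip _ _ h
    rw [Walk.length_cons, Nat.even_add_one, ← ih]
    constructor
    · intro h2 h3
      tauto
    · intro h2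
      tauto

open scoped Classical in
private noncomputable def oNb {W : Type} (H : SimpleGraph W) (c x : W) : W :=
  if h : ∃ y, H.Adj c y ∧ y ≠ x then h.choose else x

private lemma honb {W : Type} {H : SimpleGraph W} {c x : W}
    (h2 : (H.neighborSet c).ncard = 2) (hx : H.Adj c x) :
    H.Adj c (oNb H c x) ∧ oNb H c x ≠ x ∧
      ∀ z, H.Adj c z → z = x ∨ z = oNb H c x := by
  obtain ⟨p, q, hpq, hset⟩ := Set.ncard_eq_two.mp h2
  have hmem : ∀ z, H.Adj c z ↔ (z = p ∨ z = q) := by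
    intro z
    constructor
    · intro hz
      have : z ∈ H.neighborSet c := hz
      rw [hset] at this
      simpa using this
    · intro hz
      have : z ∈ H.neighborSet c := by rw [hset]; simpa using hz
      exact this
  have hex : ∃ y, H.Adj c y ∧ y ≠ x := by
    rcases (hmem x).mp hx with rfl | rfl
    · exact ⟨q, (hmem q).mpr (Or.inr rfl), fun h => hpq h.symm⟩
    · exact ⟨p, (hmem p).mpr (Or.inl rfl), hpq⟩
  have hch := hex.choose_spec
  rw [oNb, dif_pos hex]
  refine ⟨hch.1, hch.2, ?_⟩
  intro z hz
  rcases (hmem z).mp hz with rfl | rfl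
  · rcases (hmem x).mp hx with rfl | h
    · exact Or.inl rfl
    · rcases (hmem _).mp hch.1 with h' | h'
      · exact Or.inr h'.symm
      · exact absurd (h' ▸ h.symm ▸ rfl : hex.choose = x) hch.2
  · rcases (hmem x).mp hx with h | rfl
    · rcases (hmem _).mp hch.1 with h' | h'
      · exact absurd (h' ▸ h.symm ▸ rfl : hex.choose = x) hch.2
      · exact Or.inr h'.symm
    · exact Or.inl rfl

private lemma ncard_filter_eq {W : Type} [Fintype W] (p : W → Prop) [DecidablePred p] :
    {w | p w}.ncard = (Finset.univ.filter p).card := by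
  rw [← Set.ncard_coe_finset]
  congr 1
  ext w
  simp

private lemma key {W : Type} [Fintype W] (H : SimpleGraph W) (isv : W → Prop)
    (hbip : ∀ u w, H.Adj u w → (isv u ↔ ¬ isv w))
    (dl k b : ℕ) (hdl : 3 ≤ dl) (hk : 1 ≤ k)
    (hreg : ∀ w, isv w → (H.neighborSet w).ncard = dl)
    (hdeg : ∀ w, ¬ isv w → (H.neighborSet w).ncard = 1 ∨ (H.neighborSet w).ncard = 2)
    (hgirth : ∀ (x : W) (c : H.Walk x x), c.IsCycle → 4 * k + 2 ≤ c.length)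
    (hconn : H.Connected)
    (hb : {w | ¬ isv w ∧ (H.neighborSet w).ncard = 1}.ncard = b)
    (hba : b < {w | isv w}.ncard) (hdb : b < dl * (dl - 1)) :
    1 + dl + (dl * (dl - 1) - b) * ∑ i ∈ Finset.range (k - 1), (dl - 1) ^ i
      ≤ {w | isv w}.ncard := by
  classical
  obtain ⟨e, rfl⟩ : ∃ e, dl = e + 1 := ⟨dl - 1, by omega⟩
  simp only [Nat.add_sub_cancel] at hdb ⊢
  have he2 : 2 ≤ e := by omega
  -- unique neighbor of a degree-1 vertex
  have huniq1 : ∀ c, (H.neighborSet c).ncard = 1 →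
      ∀ z1 z2, H.Adj c z1 → H.Adj c z2 → z1 = z2 := by
    intro c h1 z1 z2 hz1 hz2
    obtain ⟨y, hy⟩ := Set.ncard_eq_one.mp h1
    have e1 : z1 ∈ H.neighborSet c := hz1
    have e2 : z2 ∈ H.neighborSet c := hz2
    rw [hy] at e1 e2
    simp only [Set.mem_singleton_iff] at e1 e2
    rw [e1, e2]
  -- choose the root: a variable node with no degree-1 check neighbor
  obtain ⟨v, hvvar, hvgood⟩ :
      ∃ v, isv v ∧ ∀ c, H.Adj v c → (H.neighborSet c).ncard ≠ 1 := by
    by_contra hno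
    push_neg at hno
    set f : W → W := fun c => if h : ∃ y, H.Adj c y then h.choose else c with hf
    have hsub : {w | isv w} ⊆ f '' {w | ¬ isv w ∧ (H.neighborSet w).ncard = 1} := by
      intro x hx
      obtain ⟨c, hadj, h1⟩ := hno x hx
      refine ⟨c, ⟨fun hc => ((hbip x c hadj).mp hx) hc, h1⟩, ?_⟩
      have hex : ∃ y, H.Adj c y := ⟨x, hadj.symm⟩
      show (if h : ∃ y, H.Adj c y then h.choose else c) = x
      rw [dif_pos hex]
      exact huniq1 c h1 _ _ hex.choose_spec hadj.symm
    have h1 := Set.ncard_le_ncard hsub (Set.toFinite _)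
    have h2 := Set.ncard_image_le
      (s := {w | ¬ isv w ∧ (H.neighborSet w).ncard = 1}) (f := f) (Set.toFinite _)
    omega
  have hreach : ∀ x, H.Reachable v x := fun x => hconn.preconnected v x
  have hparity : ∀ x, (isv x ↔ Even (H.dist v x)) := by
    intro x
    obtain ⟨p, hp, hlen⟩ := (hreach x).exists_path_of_dist
    have h1 := walk_parity_s17 hbip p
    rw [hlen] at h1
    rw [← h1]
    simp [hvvar]
  have hparity' : ∀ x, ¬ isv x → H.dist v x % 2 = 1 := by
    intro x hx
    have h1 : ¬ Even (H.dist v x) := fun he => hx ((hparity x).mpr he)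
    rw [Nat.even_iff] at h1
    omega
  have hadj_le : ∀ x c, H.Adj x c → H.dist v c ≤ H.dist v x + 1 := by
    intro x c h
    have h1 : H.dist x c = 1 := dist_eq_one_iff_adj.mpr h
    have h2 := hconn.dist_triangle (u := v) (v := x) (w := c)
    omega
  -- the workhorse girth argument
  have uniq_pred : ∀ (m : ℕ) (t w1 w2 : W), H.Adj t w1 → H.Adj t w2 →
      H.dist v w1 = m → H.dist v w2 = m → H.dist v t = m + 1 →
      2 * m + 2 < 4 * k + 2 → w1 = w2 := by
    intro m t w1 w2 ha1 ha2 hd1 hd2 hdt hm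
    by_contra hne
    obtain ⟨p1, hp1, hl1⟩ := (hreach w1).exists_path_of_dist
    obtain ⟨p2, hp2, hl2⟩ := (hreach w2).exists_path_of_dist
    have hts : ∀ {w : W} (p : H.Walk v w), p.length ≤ m → t ∉ p.support := by
      intro w p hl hmem
      have h1 : H.dist v t ≤ (p.takeUntil t hmem).length := dist_le _
      have h2 := Walk.length_takeUntil_le p hmem
      omega
    have hq1 : (p1.concat ha1.symm).IsPath :=
      concat_isPath' hp1 ha1.symm (hts p1 (by omega))
    have hq2 : (p2.concat ha2.symm).IsPath :=
      concat_isPath' hp2 ha2.symm (hts p2 (by omega))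
    have hc1 : (p1.concat ha1.symm) ≠ (p2.concat ha2.symm) := by
      intro heqq
      have he := congrArg Walk.edges heqq
      rw [Walk.edges_concat, Walk.edges_concat, List.concat_eq_append,
        List.concat_eq_append] at he
      have h3 := (List.append_inj' he rfl).2
      simp only [List.cons.injEq, and_true] at h3
      rw [Sym2.congr_left] at h3
      exact hne h3
    obtain ⟨x, c, hcyc, hlen⟩ := cycle_bound hq1 hq2 hc1
    have hg := hgirth x c hcyc
    rw [Walk.length_concat, Walk.length_concat] at hlen
    omega
  -- level sets
  set Lv : ℕ → Finset W :=
    fun j => Finset.univ.filter (fun x => isv x ∧ H.dist v x = 2 * j) with hLv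
  set UpC : ℕ → W → Finset W := fun j x => Finset.univ.filter
    (fun c => H.Adj x c ∧ H.dist v c = 2 * j + 1 ∧ (H.neighborSet c).ncard = 2) with hUpC
  set oddF : W → Finset W := fun x =>
    Finset.univ.filter (fun c => H.Adj x c ∧ (H.neighborSet c).ncard = 1) with hoddF
  have hmemLv : ∀ j x, x ∈ Lv j ↔ (isv x ∧ H.dist v x = 2 * j) := by
    intro j x; rw [hLv]; simp
  have hmemUp : ∀ j x c, c ∈ UpC j x ↔
      (H.Adj x c ∧ H.dist v c = 2 * j + 1 ∧ (H.neighborSet c).ncard = 2) := by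
    intro j x c; rw [hUpC]; simp
  have hmemOdd : ∀ x c, c ∈ oddF x ↔ (H.Adj x c ∧ (H.neighborSet c).ncard = 1) := by
    intro x c; rw [hoddF]; simp
  have hdegcard : ∀ x : W,
      (Finset.univ.filter (fun c => H.Adj x c)).card = (H.neighborSet x).ncard := by
    intro x
    rw [← Set.ncard_coe_finset]
    congr 1
    ext c
    simp
  -- extension of a level-j vertex through a degree-2 check
  have hext : ∀ j, j + 1 ≤ k → ∀ x ∈ Lv j, ∀ c ∈ UpC j x,
      oNb H c x ∈ Lv (j + 1) ∧ H.Adj c (oNb H c x) ∧ oNb H c x ≠ x := by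
    intro j hj x hx c hc
    rw [hmemLv] at hx
    rw [hmemUp] at hc
    obtain ⟨hxv, hxd⟩ := hx
    obtain ⟨hadj, hcd, hc2⟩ := hc
    obtain ⟨hy1, hy2, -⟩ := honb hc2 hadj.symm
    have hcnv : ¬ isv c := (hbip x c hadj).mp hxv
    have hyv : isv (oNb H c x) := by
      have := hbip c _ hy1
      tauto
    have h1 : H.dist v (oNb H c x) ≤ 2 * j + 2 := by
      have := hadj_le c (oNb H c x) hy1; omega
    have h2 : 2 * j + 1 ≤ H.dist v (oNb H c x) + 1 := by
      have := hadj_le (oNb H c x) c hy1.symm; omega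
    have h3 : Even (H.dist v (oNb H c x)) := (hparity _).mp hyv
    have h4 : H.dist v (oNb H c x) = 2 * j ∨ H.dist v (oNb H c x) = 2 * j + 2 := by
      obtain ⟨m, hm⟩ := h3; omega
    rcases h4 with h4 | h4
    · exact absurd
        (uniq_pred (2 * j) c x (oNb H c x) hadj.symm hy1 hxd h4 hcd (by omega)).symm hy2
    · exact ⟨(hmemLv (j + 1) (oNb H c x)).mpr ⟨hyv, by omega⟩, hy1, hy2⟩
  -- injectivity of the extension map
  have hinj : ∀ j, j + 1 ≤ k → ∀ x1, x1 ∈ Lv j → ∀ x2, x2 ∈ Lv j →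
      ∀ c1, c1 ∈ UpC j x1 → ∀ c2, c2 ∈ UpC j x2 →
      oNb H c1 x1 = oNb H c2 x2 → c1 = c2 ∧ x1 = x2 := by
    intro j hj x1 hx1 x2 hx2 c1 hc1 c2 hc2 heqq
    obtain ⟨hy1, hadj1, hne1⟩ := hext j hj x1 hx1 c1 hc1
    obtain ⟨hy2, hadj2, hne2⟩ := hext j hj x2 hx2 c2 hc2
    have hyd : H.dist v (oNb H c1 x1) = 2 * (j + 1) := ((hmemLv _ _).mp hy1).2
    have hcd1 : H.dist v c1 = 2 * j + 1 := ((hmemUp _ _ _).mp hc1).2.1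
    have hcd2 : H.dist v c2 = 2 * j + 1 := ((hmemUp _ _ _).mp hc2).2.1
    have hc12 : c1 = c2 := by
      apply uniq_pred (2 * j + 1) (oNb H c1 x1) c1 c2 hadj1.symm
        (by rw [heqq]; exact hadj2.symm) hcd1 hcd2 (by omega) (by omega)
    subst hc12
    have h2 : (H.neighborSet c1).ncard = 2 := ((hmemUp _ _ _).mp hc1).2.2
    have hadjx1 : H.Adj c1 x1 := (((hmemUp _ _ _).mp hc1).1).symm
    obtain ⟨-, -, hall⟩ := honb h2 hadjx1
    have hadjx2 : H.Adj c1 x2 := (((hmemUp _ _ _).mp hc2).1).symm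
    rcases hall x2 hadjx2 with h | h
    · exact ⟨rfl, h.symm⟩
    · exact absurd (h.trans heqq).symm hne2
  -- counting: level j+1 is at least the number of up-extensions from level j
  have hcount : ∀ j, j + 1 ≤ k → ∑ x ∈ Lv j, (UpC j x).card ≤ (Lv (j + 1)).card := by
    intro j hj
    have h1 : ∀ x ∈ Lv j,
        ((UpC j x).image (fun c => oNb H c x)).card = (UpC j x).card := by
      intro x hx
      apply Finset.card_image_of_injOn
      intro c1 h1 c2 h2 he
      exact (hinj j hj x hx x hx c1 h1 c2 h2 he).1
    have h2 : ((Lv j).biUnion (fun x => (UpC j x).image (fun c => oNb H c x))).card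
        = ∑ x ∈ Lv j, ((UpC j x).image (fun c => oNb H c x)).card := by
      apply Finset.card_biUnion
      intro x1 hx1 x2 hx2 hne
      rw [Function.onFun, Finset.disjoint_left]
      intro y hy1 hy2
      simp only [Finset.mem_image] at hy1 hy2
      obtain ⟨c1, hc1, he1⟩ := hy1
      obtain ⟨c2, hc2, he2⟩ := hy2
      exact hne (hinj j hj x1 hx1 x2 hx2 c1 hc1 c2 hc2 (he1.trans he2.symm)).2
    calc ∑ x ∈ Lv j, (UpC j x).card
        = ∑ x ∈ Lv j, ((UpC j x).image (fun c => oNb H c x)).card :=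
          (Finset.sum_congr rfl h1).symm
      _ = ((Lv j).biUnion (fun x => (UpC j x).image (fun c => oNb H c x))).card := h2.symm
      _ ≤ (Lv (j + 1)).card := by
          apply Finset.card_le_card
          intro y hy
          rw [Finset.mem_biUnion] at hy
          obtain ⟨x, hx, hy⟩ := hy
          rw [Finset.mem_image] at hy
          obtain ⟨c, hc, rfl⟩ := hy
          exact (hext j hj x hx c hc).1
  -- expansion at an interior level
  have hexp : ∀ j, 1 ≤ j → j ≤ k → ∀ x ∈ Lv j,
      e + 1 ≤ (UpC j x).card + 1 + (oddF x).card := by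
    intro j hj1 hj2 x hx
    obtain ⟨hxv, hxd⟩ := (hmemLv _ _).mp hx
    set down : Finset W :=
      Finset.univ.filter (fun c => H.Adj x c ∧ H.dist v c + 1 = 2 * j) with hdown
    have hsplit : Finset.univ.filter (fun c => H.Adj x c) ⊆ down ∪ UpC j x ∪ oddF x := by
      intro c hc
      rw [Finset.mem_filter] at hc
      have hadj : H.Adj x c := hc.2
      have hcnv : ¬ isv c := (hbip x c hadj).mp hxv
      have hodd := hparity' c hcnv
      have h1 := hadj_le x c hadj
      have h2 := hadj_le c x hadj.symm
      have h3 : H.dist v c + 1 = 2 * j ∨ H.dist v c = 2 * j + 1 := by omega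
      rcases h3 with h3 | h3
      · refine Finset.mem_union_left _ (Finset.mem_union_left _ ?_)
        rw [hdown, Finset.mem_filter]
        exact ⟨Finset.mem_univ _, hadj, h3⟩
      · rcases hdeg c hcnv with h4 | h4
        · exact Finset.mem_union_right _ ((hmemOdd _ _).mpr ⟨hadj, h4⟩)
        · exact Finset.mem_union_left _
            (Finset.mem_union_right _ ((hmemUp _ _ _).mpr ⟨hadj, h3, h4⟩))
    have hdown1 : down.card ≤ 1 := by
      rw [Finset.card_le_one]
      intro c1 hc1 c2 hc2
      rw [hdown, Finset.mem_filter] at hc1 hc2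
      exact uniq_pred (2 * j - 1) x c1 c2 hc1.2.1 hc2.2.1 (by omega) (by omega)
        (by omega) (by omega)
    have h5 := Finset.card_le_card hsplit
    have h6 := Finset.card_union_le (down ∪ UpC j x) (oddF x)
    have h7 := Finset.card_union_le down (UpC j x)
    have h8 : (Finset.univ.filter (fun c => H.Adj x c)).card = e + 1 := by
      rw [hdegcard]; exact hreg x hxv
    omega
  -- the zeroth level
  have hLv0 : Lv 0 = {v} := by
    ext x
    rw [hmemLv, Finset.mem_singleton]
    constructor
    · rintro ⟨-, h0⟩
      by_contra hne
      have : H.dist v x ≠ 0 :=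
        dist_ne_zero_iff_ne_and_reachable.mpr ⟨fun h => hne h.symm, hreach x⟩
      omega
    · rintro rfl
      exact ⟨hvvar, by simp⟩
  have hroot : e + 1 ≤ (UpC 0 v).card := by
    have hsub : Finset.univ.filter (fun c => H.Adj v c) ⊆ UpC 0 v := by
      intro c hc
      rw [Finset.mem_filter] at hc
      have hadj := hc.2
      have hcnv : ¬ isv c := (hbip v c hadj).mp hvvar
      have hodd := hparity' c hcnv
      have h1 := hadj_le v c hadj
      have h0 : H.dist v v = 0 := by simp
      rcases hdeg c hcnv with h4 | h4
      · exact absurd h4 (hvgood c hadj)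
      · exact (hmemUp _ _ _).mpr ⟨hadj, by omega, h4⟩
    have h8 : (Finset.univ.filter (fun c => H.Adj v c)).card = e + 1 := by
      rw [hdegcard]; exact hreg v hvvar
    rw [← h8]
    exact Finset.card_le_card hsub
  have hn1 : e + 1 ≤ (Lv 1).card := by
    have h1 := hcount 0 (by omega)
    rw [hLv0, Finset.sum_singleton] at h1
    exact le_trans hroot (by simpa using h1)
  -- total of all levels is at most the number of variable nodes
  have hasum : ∑ j ∈ Finset.range (k + 1), (Lv j).card ≤ {w | isv w}.ncard := by
    rw [ncard_filter_eq]
    rw [← Finset.card_biUnion]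
    · apply Finset.card_le_card
      intro x hx
      rw [Finset.mem_biUnion] at hx
      obtain ⟨j, -, hx⟩ := hx
      rw [Finset.mem_filter]
      exact ⟨Finset.mem_univ x, ((hmemLv _ _).mp hx).1⟩
    · intro j1 h1 j2 h2 hne
      rw [Function.onFun, Finset.disjoint_left]
      intro x hx1 hx2
      have e1 := ((hmemLv _ _).mp hx1).2
      have e2 := ((hmemLv _ _).mp hx2).2
      exact hne (by omega)
  -- total number of dead ends is at most b
  have hoddinj : ∀ x1 x2 c, c ∈ oddF x1 → c ∈ oddF x2 → x1 = x2 := by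
    intro x1 x2 c h1 h2
    rw [hmemOdd] at h1 h2
    exact huniq1 c h1.2 x1 x2 h1.1.symm h2.1.symm
  have hDsum : ∑ j ∈ Finset.Icc 1 (k - 1), ∑ x ∈ Lv j, (oddF x).card ≤ b := by
    have hinner : ∀ j ∈ Finset.Icc 1 (k - 1),
        ((Lv j).biUnion oddF).card = ∑ x ∈ Lv j, (oddF x).card := by
      intro j hj
      apply Finset.card_biUnion
      intro x1 hx1 x2 hx2 hne
      rw [Function.onFun, Finset.disjoint_left]
      intro c hc1 hc2
      exact hne (hoddinj x1 x2 c hc1 hc2)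
    have houter : ((Finset.Icc 1 (k - 1)).biUnion (fun j => (Lv j).biUnion oddF)).card
        = ∑ j ∈ Finset.Icc 1 (k - 1), ((Lv j).biUnion oddF).card := by
      apply Finset.card_biUnion
      intro j1 h1 j2 h2 hne
      rw [Function.onFun, Finset.disjoint_left]
      intro c hc1 hc2
      rw [Finset.mem_biUnion] at hc1 hc2
      obtain ⟨x1, hx1, hc1⟩ := hc1
      obtain ⟨x2, hx2, hc2⟩ := hc2
      have hx12 := hoddinj x1 x2 c hc1 hc2
      subst hx12
      have e1 := ((hmemLv _ _).mp hx1).2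
      have e2 := ((hmemLv _ _).mp hx2).2
      exact hne (by omega)
    have hsub : (Finset.Icc 1 (k - 1)).biUnion (fun j => (Lv j).biUnion oddF)
        ⊆ Finset.univ.filter (fun c => ¬ isv c ∧ (H.neighborSet c).ncard = 1) := by
      intro c hc
      rw [Finset.mem_biUnion] at hc
      obtain ⟨j, -, hc⟩ := hc
      rw [Finset.mem_biUnion] at hc
      obtain ⟨x, hx, hc⟩ := hc
      rw [hmemOdd] at hc
      rw [Finset.mem_filter]
      exact ⟨Finset.mem_univ _, (hbip x c hc.1).mp ((hmemLv _ _).mp hx).1, hc.2⟩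
    have hbcard :
        (Finset.univ.filter (fun c => ¬ isv c ∧ (H.neighborSet c).ncard = 1)).card = b := by
      rw [← ncard_filter_eq]; exact hb
    calc ∑ j ∈ Finset.Icc 1 (k - 1), ∑ x ∈ Lv j, (oddF x).card
        = ∑ j ∈ Finset.Icc 1 (k - 1), ((Lv j).biUnion oddF).card :=
          (Finset.sum_congr rfl hinner).symm
      _ = ((Finset.Icc 1 (k - 1)).biUnion (fun j => (Lv j).biUnion oddF)).card := houter.symm
      _ ≤ _ := Finset.card_le_card hsub
      _ = b := hbcard
  -- recursion
  have hrec : ∀ j, 1 ≤ j → j + 1 ≤ k →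
      (e + 1) * (Lv j).card ≤ (Lv (j + 1)).card + (Lv j).card
        + ∑ x ∈ Lv j, (oddF x).card := by
    intro j h1 h2
    calc (e + 1) * (Lv j).card = ∑ _x ∈ Lv j, (e + 1) := by
          rw [Finset.sum_const, smul_eq_mul, mul_comm]
      _ ≤ ∑ x ∈ Lv j, ((UpC j x).card + 1 + (oddF x).card) :=
          Finset.sum_le_sum (fun x hx => hexp j h1 (by omega) x hx)
      _ = (∑ x ∈ Lv j, (UpC j x).card) + (Lv j).card + ∑ x ∈ Lv j, (oddF x).card := by
          rw [Finset.sum_add_distrib, Finset.sum_add_distrib, Finset.sum_const,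
            smul_eq_mul, mul_one]
      _ ≤ _ := by
          have := hcount j h2
          omega
  -- main induction
  have hmain : ∀ i, i + 2 ≤ k →
      (e + 1) * e * e ^ i ≤ (Lv (i + 2)).card
        + (∑ j ∈ Finset.Icc 1 (i + 1), ∑ x ∈ Lv j, (oddF x).card) * e ^ i := by
    intro i
    induction i with
    | zero =>
      intro h2
      simp only [show (0 : ℕ) + 2 = 2 from rfl, show (0 : ℕ) + 1 = 1 from rfl]
      have hr := hrec 1 le_rfl h2
      norm_num at hr
      have hr' : e * (Lv 1).card + (Lv 1).card ≤ (Lv 2).card + (Lv 1).card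
          + ∑ x ∈ Lv 1, (oddF x).card := by
        have : (e + 1) * (Lv 1).card = e * (Lv 1).card + (Lv 1).card := by ring
        omega
      have hmul : (e + 1) * e ≤ (Lv 1).card * e :=
        Nat.mul_le_mul_right e hn1
      simp only [pow_zero, mul_one]
      rw [Finset.Icc_self, Finset.sum_singleton]
      have : (Lv 1).card * e = e * (Lv 1).card := by ring
      omega
    | succ i ih =>
      intro h2
      have hih := ih (by omega)
      have hr := hrec (i + 2) (by omega) (by omega)
      simp only [show i + 2 + 1 = i + 3 from by omega] at hr
      have hstep : e * (Lv (i + 2)).card ≤ (Lv (i + 3)).card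
          + ∑ x ∈ Lv (i + 2), (oddF x).card := by
        have hexpand : (e + 1) * (Lv (i + 2)).card
            = e * (Lv (i + 2)).card + (Lv (i + 2)).card := by ring
        omega
      rw [Finset.sum_Icc_succ_top (by omega : (1 : ℕ) ≤ i + 1 + 1)]
      simp only [show i + 1 + 2 = i + 3 from by omega, show i + 1 + 1 = i + 2 from by omega,
        show i + 1 + 1 + 1 = i + 3 from by omega]
      have h1 : (e + 1) * e * e ^ (i + 1) = e * ((e + 1) * e * e ^ i) := by ring
      have h2' : e * ((e + 1) * e * e ^ i) ≤ e * ((Lv (i + 2)).card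
          + (∑ j ∈ Finset.Icc 1 (i + 1), ∑ x ∈ Lv j, (oddF x).card) * e ^ i) :=
        Nat.mul_le_mul_left e hih
      have h3 : e * ((Lv (i + 2)).card
          + (∑ j ∈ Finset.Icc 1 (i + 1), ∑ x ∈ Lv j, (oddF x).card) * e ^ i)
          = e * (Lv (i + 2)).card
          + (∑ j ∈ Finset.Icc 1 (i + 1), ∑ x ∈ Lv j, (oddF x).card) * e ^ (i + 1) := by
        ring
      have h4 : (∑ x ∈ Lv (i + 2), (oddF x).card)
          ≤ (∑ x ∈ Lv (i + 2), (oddF x).card) * e ^ (i + 1) :=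
        Nat.le_mul_of_pos_right _ (pow_pos (by omega) _)
      have h5 : ((∑ j ∈ Finset.Icc 1 (i + 1), ∑ x ∈ Lv j, (oddF x).card)
          + ∑ x ∈ Lv (i + 2), (oddF x).card) * e ^ (i + 1)
          = (∑ j ∈ Finset.Icc 1 (i + 1), ∑ x ∈ Lv j, (oddF x).card) * e ^ (i + 1)
          + (∑ x ∈ Lv (i + 2), (oddF x).card) * e ^ (i + 1) := by ring
      omega
  -- per-level lower bound
  have hfin : ∀ i, i < k - 1 → ((e + 1) * e - b) * e ^ i ≤ (Lv (i + 2)).card := by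
    intro i hi
    have h1 := hmain i (by omega)
    have h2 : (∑ j ∈ Finset.Icc 1 (i + 1), ∑ x ∈ Lv j, (oddF x).card) ≤ b := by
      refine le_trans (Finset.sum_le_sum_of_subset ?_) hDsum
      intro j hj
      simp only [Finset.mem_Icc] at hj ⊢
      omega
    have h3 : ((e + 1) * e - b) * e ^ i = (e + 1) * e * e ^ i - b * e ^ i := by
      rw [Nat.sub_mul]
    rw [h3]
    rw [Nat.sub_le_iff_le_add]
    calc (e + 1) * e * e ^ i
        ≤ (Lv (i + 2)).card
          + (∑ j ∈ Finset.Icc 1 (i + 1), ∑ x ∈ Lv j, (oddF x).card) * e ^ i := h1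
      _ ≤ (Lv (i + 2)).card + b * e ^ i := by
          have := Nat.mul_le_mul_right (e ^ i) h2
          omega
  -- final assembly
  have hsplitsum : ∑ j ∈ Finset.range (k + 1), (Lv j).card
      = (∑ i ∈ Finset.range (k - 1), (Lv (i + 1 + 1)).card) + (Lv 1).card
        + (Lv 0).card := by
    have hk1 : k + 1 = k - 1 + 1 + 1 := by omega
    rw [hk1, Finset.sum_range_succ', Finset.sum_range_succ']
  have h0card : (Lv 0).card = 1 := by rw [hLv0]; exact Finset.card_singleton v
  have hsum2 : ∑ i ∈ Finset.range (k - 1), ((e + 1) * e - b) * e ^ i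
      ≤ ∑ i ∈ Finset.range (k - 1), (Lv (i + 1 + 1)).card := by
    apply Finset.sum_le_sum
    intro i hi
    rw [Finset.mem_range] at hi
    exact hfin i hi
  calc 1 + (e + 1) + ((e + 1) * e - b) * ∑ i ∈ Finset.range (k - 1), e ^ i
      = 1 + (e + 1) + ∑ i ∈ Finset.range (k - 1), ((e + 1) * e - b) * e ^ i := by
        rw [Finset.mul_sum]
    _ ≤ (Lv 0).card + (Lv 1).card
        + ∑ i ∈ Finset.range (k - 1), (Lv (i + 1 + 1)).card := by
        have := hn1
        omega
    _ = ∑ j ∈ Finset.range (k + 1), (Lv j).card := by rw [hsplitsum]; omega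
    _ ≤ {w | isv w}.ncard := hasum

/-- Let `G` be a left-regular Tanner graph with left degree `d_l ≥ 3`
and girth `g = 4k+2` (`k ≥ 1`). If `S` is an `(a,b)` elementary trapping set with
connected induced subgraph, `b < a` and `d_l(d_l−1) > b`, then
`a ≥ 1 + d_l + (d_l(d_l−1) − b) · Σ_{i=0}^{k−2} (d_l−1)^i`. -/
theorem stmt17 {V : Type} [Fintype V] (G : SimpleGraph V) (isVar : V → Prop)
    (hbip : Bipartite G isVar)
    (dl k : ℕ) (hdl : 3 ≤ dl) (hk : 1 ≤ k)
    (hreg : ∀ v, isVar v → degG G v = dl)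
    (hg : G.girth = ((4 * k + 2 : ℕ) : ℕ∞))
    (S : Set V) (a b : ℕ) (hSL : S ⊆ {v | isVar v})
    (ha : S.ncard = a) (hb : (GamO G S).ncard = b)
    (helem : IsElem G S)
    (hconn : (G.induce (S ∪ Gam G S)).Connected)
    (hba : b < a) (hdb : b < dl * (dl - 1)) :
    1 + dl + (dl * (dl - 1) - b) * ∑ i ∈ Finset.range (k - 1), (dl - 1) ^ i ≤ a := by
  classical
  haveI : Fintype ↥(S ∪ Gam G S) := Fintype.ofFinite _
  set U : Set V := S ∪ Gam G S with hU
  set H : SimpleGraph ↥U := G.induce U with hH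
  set isv : ↥U → Prop := fun w => (w : V) ∈ S with hisv
  have hGamCheck : ∀ c ∈ Gam G S, ¬ isVar c := by
    rintro c ⟨x, hxS, hadj⟩
    exact fun hc => ((hbip x c hadj).mp (hSL hxS)) hc
  have hSnG : ∀ x ∈ S, x ∉ Gam G S := fun x hx hxG => hGamCheck x hxG (hSL hx)
  have hbip' : ∀ u w : ↥U, H.Adj u w → (isv u ↔ ¬ isv w) := by
    rintro ⟨u, hu⟩ ⟨w, hw⟩ hadj
    have hG : G.Adj u w := hadj
    have h1 := hbip u w hG
    simp only [hisv]
    constructor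
    · intro huS hwS
      exact (h1.mp (hSL huS)) (hSL hwS)
    · intro hwS
      have hwG : w ∈ Gam G S := hw.resolve_left hwS
      have hu' : isVar u := h1.mpr (hGamCheck w hwG)
      rcases hu with huS | huG
      · exact huS
      · exact absurd hu' (hGamCheck u huG)
  -- neighbor set images
  have himgS : ∀ x : ↥U, (x : V) ∈ S →
      Subtype.val '' (H.neighborSet x) = G.neighborSet (x : V) := by
    intro x hxS
    ext c
    constructor
    · rintro ⟨w, hw, rfl⟩
      exact hw
    · intro hc
      have hcU : c ∈ U := Or.inr ⟨(x : V), hxS, hc⟩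
      exact ⟨⟨c, hcU⟩, hc, rfl⟩
  have himgC : ∀ c : ↥U, (c : V) ∉ S →
      Subtype.val '' (H.neighborSet c) = {y | y ∈ S ∧ G.Adj (c : V) y} := by
    intro c hcS
    ext y
    constructor
    · rintro ⟨w, hw, rfl⟩
      have hadj : H.Adj c w := hw
      have := (hbip' c w hadj)
      simp only [hisv] at this
      have hwS : (w : V) ∈ S := by tauto
      exact ⟨hwS, hw⟩
    · rintro ⟨hyS, hadj⟩
      exact ⟨⟨y, Or.inl hyS⟩, hadj, rfl⟩
  have hreg' : ∀ w : ↥U, isv w → (H.neighborSet w).ncard = dl := by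
    intro w hw
    have h1 := himgS w hw
    have h2 : (Subtype.val '' (H.neighborSet w)).ncard = (H.neighborSet w).ncard :=
      Set.ncard_image_of_injective _ Subtype.val_injective
    rw [h1] at h2
    rw [← h2]
    exact hreg _ (hSL hw)
  have hdegIn : ∀ c : ↥U, ¬ isv c → (H.neighborSet c).ncard = degIn G S (c : V) := by
    intro c hc
    have h1 := himgC c hc
    have h2 : (Subtype.val '' (H.neighborSet c)).ncard = (H.neighborSet c).ncard :=
      Set.ncard_image_of_injective _ Subtype.val_injective
    rw [h1] at h2
    rw [← h2]
    rfl
  have hGamU : ∀ c : ↥U, ¬ isv c → (c : V) ∈ Gam G S := by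
    intro c hc
    exact c.2.resolve_left hc
  have hdeg' : ∀ c : ↥U, ¬ isv c →
      (H.neighborSet c).ncard = 1 ∨ (H.neighborSet c).ncard = 2 := by
    intro c hc
    rw [hdegIn c hc]
    exact helem _ (hGamU c hc)
  have hb' : {w : ↥U | ¬ isv w ∧ (H.neighborSet w).ncard = 1}.ncard = b := by
    have himg : Subtype.val '' {w : ↥U | ¬ isv w ∧ (H.neighborSet w).ncard = 1}
        = GamO G S := by
      ext c
      constructor
      · rintro ⟨w, ⟨hw1, hw2⟩, rfl⟩
        refine ⟨hGamU w hw1, ?_⟩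
        rw [← hdegIn w hw1, hw2]
        exact odd_one
      · rintro ⟨hcG, hcOdd⟩
        have hcS : c ∉ S := fun hcS => hGamCheck c hcG (hSL hcS)
        have hcU : c ∈ U := Or.inr hcG
        refine ⟨⟨c, hcU⟩, ⟨hcS, ?_⟩, rfl⟩
        rw [hdegIn ⟨c, hcU⟩ hcS]
        rcases helem c hcG with h | h
        · exact h
        · rw [h] at hcOdd
          exact absurd hcOdd (by decide)
    rw [← Set.ncard_image_of_injective _ Subtype.val_injective, himg]
    exact hb
  have ha' : {w : ↥U | isv w}.ncard = a := by
    have himg : Subtype.val '' {w : ↥U | isv w} = S := by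
      ext x
      constructor
      · rintro ⟨w, hw, rfl⟩
        exact hw
      · intro hx
        exact ⟨⟨x, Or.inl hx⟩, hx, rfl⟩
    rw [← Set.ncard_image_of_injective _ Subtype.val_injective, himg]
    exact ha
  have hG4 : ∀ (y : V) (w : G.Walk y y), w.IsCycle → 4 * k + 2 ≤ w.length := by
    intro y w hw
    have h1 : G.girth = 4 * k + 2 := by exact_mod_cast hg
    have hne : G.egirth ≠ ⊤ := by
      intro h
      rw [girth, h] at h1
      simp at h1
    have h2 : G.egirth = ((4 * k + 2 : ℕ) : ℕ∞) := by
      rw [← h1, girth, ENat.coe_toNat hne]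
    have h3 := le_egirth.mp (le_of_eq h2.symm) y w hw
    exact_mod_cast h3
  have hgirth' : ∀ (x : ↥U) (c : H.Walk x x), c.IsCycle → 4 * k + 2 ≤ c.length := by
    intro x c hc
    have hemb : H ↪g G := SimpleGraph.Embedding.induce U
    have hc' : (c.map hemb.toHom).IsCycle :=
      (Walk.map_isCycle_iff_of_injective hemb.injective).mpr hc
    have h1 := hG4 _ (c.map hemb.toHom) hc'
    rwa [Walk.length_map] at h1
  have hkey := key H isv hbip' dl k b hdl hk hreg' hdeg' hgirth' hconn hb'
    (by rw [ha']; exact hba) hdb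
  rw [ha'] at hkey
  exact hkey
end

section
/- Let G = (L ∪ R, E) be a left-regular Tanner graph with left degree d_l ≥ 3 whose girth g satisfies g = 4k for an integer k ≥ 2 (so g > 4). Let S be an (a,b) elementary trapping set with connected induced subgraph G(S) such that b < a and d_l(d_l − 1) > b. Then, as an inequality of rational numbers, a ≥ 1 + d_l + (d_l(d_l−1) − b) · Σ_{i=0}^{k−3} (d_l−1)^i + (d_l(d_l−1) − b)(d_l−1)^{k−2}/d_l, where the sum is empty (equal to 0) when k = 2. -/
open SimpleGraph

lemma path_length_one_of_edge {V : Type} {G : SimpleGraph V} {u v : V}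
    {p : G.Walk u v} (hp : p.IsPath) (he : s(u, v) ∈ p.edges) : p.length = 1 := by
  cases p with
  | nil => simp at he
  | @cons _ y _ h p' =>
    rw [Walk.cons_isPath_iff] at hp
    rw [Walk.edges_cons, List.mem_cons] at he
    rcases he with he | he
    · rw [Sym2.eq_iff] at he
      rcases he with ⟨-, rfl⟩ | ⟨rfl, rfl⟩
      · rw [(Walk.isPath_iff_eq_nil (p := p')).mp hp.1]
        simp
      · exact absurd rfl (G.ne_of_adj h)
    · exact absurd (Walk.fst_mem_support_of_mem_edges p' he) hp.2

lemma walk_eq_of_length_one {V : Type} {G : SimpleGraph V} {u v : V}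
    (p q : G.Walk u v) (hp : p.length = 1) (hq : q.length = 1) : p = q := by
  cases p with
  | nil => simp at hp
  | @cons _ y _ h p' =>
    cases q with
    | nil => simp at hq
    | @cons _ z _ h' q' =>
      simp only [Walk.length_cons, Nat.add_right_cancel_iff] at hp hq
      cases p' with
      | nil =>
        cases q' with
        | nil => rfl
        | cons h'' q'' => simp at hq
      | cons h'' p'' => simp at hp

lemma two_paths_cycle {V : Type} {G : SimpleGraph V} :
    ∀ (n : ℕ) {u v : V} (p q : G.Walk u v), p.IsPath → q.IsPath → p ≠ q →
      p.length + q.length ≤ n →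
      ∃ (x : V) (c : G.Walk x x), c.IsCycle ∧ c.length ≤ p.length + q.length := by
  classical
  intro n
  induction n with
  | zero =>
    intro u v p q hp hq hne hlen
    have hp0 : p.length = 0 := by omega
    have hq0 : q.length = 0 := by omega
    have huv : u = v := Walk.eq_of_length_eq_zero hp0
    subst huv
    rw [Walk.length_eq_zero_iff] at hp0 hq0
    exact absurd ((Walk.nil_iff_eq_nil.mp hp0).trans (Walk.nil_iff_eq_nil.mp hq0).symm) hne
  | succ n ih =>
    intro u v p q hp hq hne hlen
    by_cases hz : ∃ z, z ∈ p.support ∧ z ∈ q.support ∧ z ≠ u ∧ z ≠ v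
    · obtain ⟨z, hzp, hzq, hzu, hzv⟩ := hz
      have hps := Walk.take_spec p hzp
      have hqs := Walk.take_spec q hzq
      have hlp : (p.takeUntil z hzp).length + (p.dropUntil z hzp).length = p.length := by
        rw [← Walk.length_append, hps]
      have hlq : (q.takeUntil z hzq).length + (q.dropUntil z hzq).length = q.length := by
        rw [← Walk.length_append, hqs]
      have hpb1 : 1 ≤ (p.dropUntil z hzp).length := by
        rcases Nat.eq_zero_or_pos (p.dropUntil z hzp).length with h | h
        · exact absurd (Walk.eq_of_length_eq_zero h) hzv
        · omega
      have hqb1 : 1 ≤ (q.dropUntil z hzq).length := by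
        rcases Nat.eq_zero_or_pos (q.dropUntil z hzq).length with h | h
        · exact absurd (Walk.eq_of_length_eq_zero h) hzv
        · omega
      have hpa1 : 1 ≤ (p.takeUntil z hzp).length := by
        rcases Nat.eq_zero_or_pos (p.takeUntil z hzp).length with h | h
        · exact absurd (Walk.eq_of_length_eq_zero h).symm hzu
        · omega
      have hqa1 : 1 ≤ (q.takeUntil z hzq).length := by
        rcases Nat.eq_zero_or_pos (q.takeUntil z hzq).length with h | h
        · exact absurd (Walk.eq_of_length_eq_zero h).symm hzu
        · omega
      by_cases haa : p.takeUntil z hzp = q.takeUntil z hzq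
      · have hbb : p.dropUntil z hzp ≠ q.dropUntil z hzq := by
          intro h
          apply hne
          rw [← hps, ← hqs, haa, h]
        obtain ⟨x, c, hc, hcl⟩ := ih (p.dropUntil z hzp) (q.dropUntil z hzq)
          (hp.dropUntil hzp) (hq.dropUntil hzq) hbb (by omega)
        exact ⟨x, c, hc, by omega⟩
      · obtain ⟨x, c, hc, hcl⟩ := ih (p.takeUntil z hzp) (q.takeUntil z hzq)
          (hp.takeUntil hzp) (hq.takeUntil hzq) haa (by omega)
        exact ⟨x, c, hc, by omega⟩
    · push_neg at hz
      have hsub : ∀ x, x ∈ p.support → x ∈ q.support → x = u ∨ x = v := by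
        intro x hxp hxq
        by_cases hxu : x = u
        · exact Or.inl hxu
        · exact Or.inr (hz x hxp hxq hxu)
      have huv : u ≠ v := by
        rintro rfl
        exact hne (((Walk.isPath_iff_eq_nil (p := p)).mp hp).trans
          ((Walk.isPath_iff_eq_nil (p := q)).mp hq).symm)
      -- edges disjoint
      have hdisj : ∀ e ∈ p.edges, e ∉ q.edges := by
        intro e hep heq
        induction e with
        | h x y =>
          have hadj : G.Adj x y := (G.mem_edgeSet).mp (p.edges_subset_edgeSet hep)
          have hxp := Walk.fst_mem_support_of_mem_edges p hep
          have hyp := Walk.snd_mem_support_of_mem_edges p hep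
          have hxq := Walk.fst_mem_support_of_mem_edges q heq
          have hyq := Walk.snd_mem_support_of_mem_edges q heq
          have hx := hsub x hxp hxq
          have hy := hsub y hyp hyq
          have hxy : x ≠ y := G.ne_of_adj hadj
          have he' : s(x, y) = s(u, v) := by
            rcases hx with rfl | rfl <;> rcases hy with rfl | rfl
            · exact absurd rfl hxy
            · rfl
            · exact Sym2.eq_swap
            · exact absurd rfl hxy
          rw [he'] at hep heq
          have h1 := path_length_one_of_edge hp hep
          have h2 := path_length_one_of_edge hq heq
          exact hne (walk_eq_of_length_one p q h1 h2)
      refine ⟨u, p.append q.reverse, ?_, by rw [Walk.length_append, Walk.length_reverse]⟩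
      rw [Walk.isCycle_def]
      refine ⟨⟨?_⟩, ?_, ?_⟩
      · -- IsTrail : edges nodup
        rw [Walk.edges_append, Walk.edges_reverse]
        rw [List.nodup_append]
        refine ⟨hp.isTrail.edges_nodup, List.nodup_reverse.mpr hq.isTrail.edges_nodup, ?_⟩
        intro e hep e' heq hee
        subst hee
        exact hdisj e hep (List.mem_reverse.mp heq)
      · -- ne nil
        intro h
        have := congrArg Walk.length h
        rw [Walk.length_append, Walk.length_reverse] at this
        simp only [Walk.length_nil] at this
        have hp1 : 1 ≤ p.length := by
          rcases Nat.eq_zero_or_pos p.length with h0 | h0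
          · exact absurd (Walk.eq_of_length_eq_zero h0) huv
          · omega
        omega
      · -- support tail nodup
        rw [Walk.support_append]
        rw [Walk.support_eq_cons p, List.cons_append, List.tail_cons]
        rw [List.nodup_append]
        have hpn := hp.support_nodup
        have hqrn := hq.reverse.support_nodup
        rw [Walk.support_eq_cons p] at hpn
        rw [Walk.support_eq_cons q.reverse] at hqrn
        rw [List.nodup_cons] at hpn hqrn
        refine ⟨hpn.2, hqrn.2, ?_⟩
        intro x hxp x' hxq hxx
        subst hxx
        have hxp' : x ∈ p.support := by
          rw [Walk.support_eq_cons p]; exact List.mem_cons_of_mem _ hxp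
        have hxq' : x ∈ q.support := by
          have : x ∈ q.reverse.support := by
            rw [Walk.support_eq_cons q.reverse]; exact List.mem_cons_of_mem _ hxq
          rw [Walk.support_reverse, List.mem_reverse] at this
          exact this
        rcases hsub x hxp' hxq' with rfl | rfl
        · exact hpn.1 hxp
        · exact hqrn.1 hxq

lemma walk_parity_s18 {V : Type} {G : SimpleGraph V} (side : V → Prop)
    (hb : ∀ x y, G.Adj x y → (side x ↔ ¬ side y)) :
    ∀ {x y : V} (p : G.Walk x y), (Even p.length ↔ (side x ↔ side y)) := by
  intro x y p
  induction p with
  | nil => simp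
  | @cons x m y h p ih =>
    have hxm := hb x m h
    rw [Walk.length_cons, Nat.even_add_one]
    tauto

set_option maxHeartbeats 1000000 in
lemma arith_main (dl k a b : ℕ) (hdl : 3 ≤ dl) (hk : 2 ≤ k) (hdb : b < dl * (dl - 1))
    (N U : ℕ → ℕ)
    (H0 : 1 ≤ N 0) (H1 : dl ≤ N 1)
    (Hstep : ∀ i, 1 ≤ i → i ≤ k - 2 → N i * dl ≤ N i + U i + N (i + 1))
    (Hlast : N (k - 1) * dl ≤ N (k - 1) + U (k - 1) + dl * N k)
    (HsumU : ∑ i ∈ Finset.Icc 1 (k - 1), U i ≤ b)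
    (HsumN : ∑ i ∈ Finset.range (k + 1), N i ≤ a) :
    1 + (dl : ℚ) + ((dl : ℚ) * ((dl : ℚ) - 1) - (b : ℚ)) *
        (∑ i ∈ Finset.range (k - 2), ((dl : ℚ) - 1) ^ i)
      + ((dl : ℚ) * ((dl : ℚ) - 1) - (b : ℚ)) * ((dl : ℚ) - 1) ^ (k - 2) / (dl : ℚ)
      ≤ (a : ℚ) := by
  obtain ⟨e, he⟩ : ∃ e : ℚ, e = (dl : ℚ) - 1 := ⟨_, rfl⟩
  obtain ⟨Dq, hDq⟩ : ∃ Dq : ℚ, Dq = (dl : ℚ) * e - (b : ℚ) := ⟨_, rfl⟩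
  have hdl1 : (1 : ℚ) ≤ (dl : ℚ) := Nat.one_le_cast.mpr (by omega)
  have he2 : (2 : ℚ) ≤ e := by
    have : (3 : ℚ) ≤ (dl : ℚ) := by exact_mod_cast hdl
    rw [he]; linarith
  have he0 : (0 : ℚ) ≤ e := by linarith
  have hdlpos : (0 : ℚ) < (dl : ℚ) := by linarith
  have hcastsub : ((dl - 1 : ℕ) : ℚ) = e := by
    rw [Nat.cast_sub (by omega : 1 ≤ dl)]; simp [he]
  have hbDq : (b : ℚ) < (dl : ℚ) * e := by
    have := (Nat.cast_lt (α := ℚ)).mpr hdb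
    rwa [Nat.cast_mul, hcastsub] at this
  have hDq0 : (0 : ℚ) ≤ Dq := by rw [hDq]; linarith
  -- sums of U are bounded by b
  have hUb : ∀ i, i ≤ k - 1 → (∑ j ∈ Finset.Icc 1 i, (U j : ℚ)) ≤ (b : ℚ) := by
    intro i hi
    have h1 : (∑ j ∈ Finset.Icc 1 i, U j) ≤ ∑ j ∈ Finset.Icc 1 (k - 1), U j :=
      Finset.sum_le_sum_of_subset (Finset.Icc_subset_Icc_right hi)
    have h2 : (∑ j ∈ Finset.Icc 1 i, U j : ℕ) ≤ b := le_trans h1 HsumU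
    calc (∑ j ∈ Finset.Icc 1 i, (U j : ℚ)) = ((∑ j ∈ Finset.Icc 1 i, U j : ℕ) : ℚ) := by
          rw [Nat.cast_sum]
      _ ≤ (b : ℚ) := by exact_mod_cast h2
  -- the main induction
  have C : ∀ i, 1 ≤ i → i ≤ k - 1 →
      ((dl : ℚ) * e - ∑ j ∈ Finset.Icc 1 i, (U j : ℚ)) * e ^ (i - 1)
        ≤ (N i : ℚ) * e - (U i : ℚ) := by
    intro i hi1
    induction i, hi1 using Nat.le_induction with
    | base =>
      intro _
      simp only [Finset.Icc_self, Finset.sum_singleton, pow_zero, mul_one,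
        Nat.sub_self]
      have h1 : (dl : ℚ) ≤ (N 1 : ℚ) := by exact_mod_cast H1
      have h2 : (dl : ℚ) * e ≤ (N 1 : ℚ) * e := mul_le_mul_of_nonneg_right h1 he0
      linarith
    | succ i hi1 ih =>
      intro hik
      have hik' : i ≤ k - 1 := by omega
      have hik2 : i ≤ k - 2 := by omega
      have hCi := ih hik'
      have hstep := Hstep i hi1 hik2
      have hstep' : (N i : ℚ) * (dl : ℚ) ≤ (N i : ℚ) + (U i : ℚ) + (N (i + 1) : ℚ) := by
        exact_mod_cast hstep
      have hrec : (N i : ℚ) * e - (U i : ℚ) ≤ (N (i + 1) : ℚ) := by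
        have hh : (N i : ℚ) * (dl : ℚ) = (N i : ℚ) * e + (N i : ℚ) := by rw [he]; ring
        linarith
      set Bi : ℚ := ∑ j ∈ Finset.Icc 1 i, (U j : ℚ) with hBi
      have hBsucc : ∑ j ∈ Finset.Icc 1 (i + 1), (U j : ℚ) = Bi + (U (i + 1) : ℚ) := by
        rw [← Finset.sum_Icc_succ_top (by omega : 1 ≤ i + 1)]
      rw [hBsucc]
      have hpow : e ^ (i + 1 - 1) = e ^ (i - 1) * e := by
        rw [← pow_succ]
        congr 1
        omega
      rw [hpow]
      have h1 : ((dl : ℚ) * e - Bi) * e ^ (i - 1) * e ≤ ((N i : ℚ) * e - (U i : ℚ)) * e :=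
        mul_le_mul_of_nonneg_right hCi he0
      have h2 : ((N i : ℚ) * e - (U i : ℚ)) * e ≤ (N (i + 1) : ℚ) * e :=
        mul_le_mul_of_nonneg_right hrec he0
      have hep : (1 : ℚ) ≤ e ^ (i - 1) * e := by
        have h3 : (1 : ℚ) ≤ e ^ (i - 1) := one_le_pow₀ (by linarith)
        have h4 : (1 : ℚ) * 1 ≤ e ^ (i - 1) * e := by
          apply mul_le_mul h3 (by linarith) (by norm_num) (by positivity)
        linarith
      have hU1 : (0 : ℚ) ≤ (U (i + 1) : ℚ) := Nat.cast_nonneg _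
      have hU2 : (U (i + 1) : ℚ) * 1 ≤ (U (i + 1) : ℚ) * (e ^ (i - 1) * e) :=
        mul_le_mul_of_nonneg_left hep hU1
      have hexpand : ((dl : ℚ) * e - (Bi + (U (i + 1) : ℚ))) * (e ^ (i - 1) * e)
          = ((dl : ℚ) * e - Bi) * e ^ (i - 1) * e
            - (U (i + 1) : ℚ) * (e ^ (i - 1) * e) := by ring
      rw [hexpand]
      linarith
  -- bound with b in place of the partial sums
  have CD : ∀ i, 1 ≤ i → i ≤ k - 1 → Dq * e ^ (i - 1) ≤ (N i : ℚ) * e - (U i : ℚ) := by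
    intro i h1 h2
    refine le_trans ?_ (C i h1 h2)
    have hb' := hUb i h2
    have hp0 : (0 : ℚ) ≤ e ^ (i - 1) := pow_nonneg he0 _
    have : Dq ≤ (dl : ℚ) * e - ∑ j ∈ Finset.Icc 1 i, (U j : ℚ) := by
      rw [hDq]; linarith
    exact mul_le_mul_of_nonneg_right this hp0
  -- middle levels
  have LN : ∀ j, 2 ≤ j → j ≤ k - 1 → Dq * e ^ (j - 2) ≤ (N j : ℚ) := by
    intro j hj2 hjk
    have h1 : 1 ≤ j - 1 := by omega
    have h2 : j - 1 ≤ k - 1 := by omega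
    have h3 : j - 1 ≤ k - 2 := by omega
    have hCD := CD (j - 1) h1 h2
    have hstep := Hstep (j - 1) h1 h3
    have hj1 : j - 1 + 1 = j := by omega
    rw [hj1] at hstep
    have hstep' : (N (j - 1) : ℚ) * (dl : ℚ) ≤ (N (j - 1) : ℚ) + (U (j - 1) : ℚ) + (N j : ℚ) := by
      exact_mod_cast hstep
    have hrec : (N (j - 1) : ℚ) * e - (U (j - 1) : ℚ) ≤ (N j : ℚ) := by
      have hh : (N (j - 1) : ℚ) * (dl : ℚ) = (N (j - 1) : ℚ) * e + (N (j - 1) : ℚ) := by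
        rw [he]; ring
      linarith
    have hidx : j - 1 - 1 = j - 2 := by omega
    rw [hidx] at hCD
    linarith
  -- last level
  have LK : Dq * e ^ (k - 2) / (dl : ℚ) ≤ (N k : ℚ) := by
    have h1 : 1 ≤ k - 1 := by omega
    have hCD := CD (k - 1) h1 (le_refl _)
    have hidx : k - 1 - 1 = k - 2 := by omega
    rw [hidx] at hCD
    have hlast' : (N (k - 1) : ℚ) * (dl : ℚ)
        ≤ (N (k - 1) : ℚ) + (U (k - 1) : ℚ) + (dl : ℚ) * (N k : ℚ) := by
      exact_mod_cast Hlast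
    have hrec : (N (k - 1) : ℚ) * e - (U (k - 1) : ℚ) ≤ (dl : ℚ) * (N k : ℚ) := by
      have hh : (N (k - 1) : ℚ) * (dl : ℚ) = (N (k - 1) : ℚ) * e + (N (k - 1) : ℚ) := by
        rw [he]; ring
      linarith
    rw [div_le_iff₀ hdlpos]
    calc Dq * e ^ (k - 2) ≤ (N (k - 1) : ℚ) * e - (U (k - 1) : ℚ) := hCD
      _ ≤ (dl : ℚ) * (N k : ℚ) := hrec
      _ = (N k : ℚ) * (dl : ℚ) := by ring
  -- splitting the sum of levels
  have hsplit : ∑ i ∈ Finset.range (k + 1), (N i : ℚ)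
      = (N 0 : ℚ) + (N 1 : ℚ) + (∑ j ∈ Finset.Icc 2 (k - 1), (N j : ℚ)) + (N k : ℚ) := by
    rw [Finset.range_eq_Ico]
    rw [← Finset.sum_Ico_consecutive (fun i => (N i : ℚ)) (by omega : 0 ≤ 2) (by omega : 2 ≤ k + 1)]
    have e1 : ∑ i ∈ Finset.Ico 0 2, (N i : ℚ) = (N 0 : ℚ) + (N 1 : ℚ) := by
      have h01 : Finset.Ico 0 2 = ({0, 1} : Finset ℕ) := by decide
      rw [h01, Finset.sum_pair (by norm_num : (0 : ℕ) ≠ 1)]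
    have e2 : ∑ i ∈ Finset.Ico 2 (k + 1), (N i : ℚ)
        = (∑ j ∈ Finset.Icc 2 (k - 1), (N j : ℚ)) + (N k : ℚ) := by
      have hik : Finset.Ico 2 k = Finset.Icc 2 (k - 1) := by
        ext x
        simp only [Finset.mem_Ico, Finset.mem_Icc]
        omega
      rw [Finset.sum_Ico_succ_top (by omega : 2 ≤ k), hik]
    rw [e1, e2]
    ring
  -- reindex the middle sum
  have hreindex : ∑ j ∈ Finset.Icc 2 (k - 1), (Dq * e ^ (j - 2))
      = Dq * ∑ i ∈ Finset.range (k - 2), e ^ i := by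
    rw [Finset.mul_sum]
    apply Finset.sum_nbij' (fun j => j - 2) (fun i => i + 2)
    · intro j hj
      simp only [Finset.mem_Icc] at hj
      simp only [Finset.mem_range]
      omega
    · intro i hi
      simp only [Finset.mem_range] at hi
      simp only [Finset.mem_Icc]
      omega
    · intro j hj
      simp only [Finset.mem_Icc] at hj
      omega
    · intro i hi
      omega
    · intro j hj
      rfl
  have hmid : Dq * (∑ i ∈ Finset.range (k - 2), e ^ i)
      ≤ ∑ j ∈ Finset.Icc 2 (k - 1), (N j : ℚ) := by
    rw [← hreindex]
    apply Finset.sum_le_sum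
    intro j hj
    simp only [Finset.mem_Icc] at hj
    exact LN j hj.1 hj.2
  have hsum : ∑ i ∈ Finset.range (k + 1), (N i : ℚ) ≤ (a : ℚ) := by
    calc ∑ i ∈ Finset.range (k + 1), (N i : ℚ)
        = ((∑ i ∈ Finset.range (k + 1), N i : ℕ) : ℚ) := by rw [Nat.cast_sum]
      _ ≤ (a : ℚ) := by exact_mod_cast HsumN
  have hN0 : (1 : ℚ) ≤ (N 0 : ℚ) := by exact_mod_cast H0
  have hN1 : (dl : ℚ) ≤ (N 1 : ℚ) := by exact_mod_cast H1
  rw [hsplit] at hsum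
  have hgoal : 1 + (dl : ℚ) + Dq * (∑ i ∈ Finset.range (k - 2), e ^ i)
      + Dq * e ^ (k - 2) / (dl : ℚ) ≤ (a : ℚ) := by linarith [LK, hmid, hsum, hN0, hN1]
  calc 1 + (dl : ℚ) + ((dl : ℚ) * ((dl : ℚ) - 1) - (b : ℚ)) *
        (∑ i ∈ Finset.range (k - 2), ((dl : ℚ) - 1) ^ i)
      + ((dl : ℚ) * ((dl : ℚ) - 1) - (b : ℚ)) * ((dl : ℚ) - 1) ^ (k - 2) / (dl : ℚ)
      = 1 + (dl : ℚ) + Dq * (∑ i ∈ Finset.range (k - 2), e ^ i)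
        + Dq * e ^ (k - 2) / (dl : ℚ) := by rw [hDq, he]
    _ ≤ (a : ℚ) := hgoal

set_option maxHeartbeats 4000000 in
/-- Let `G` be a left-regular Tanner graph with left degree `d_l ≥ 3`
and girth `g = 4k` (`k ≥ 2`). If `S` is an `(a,b)` elementary trapping set with connected
induced subgraph, `b < a` and `d_l(d_l−1) > b`, then, as rational numbers,
`a ≥ 1 + d_l + (d_l(d_l−1) − b) · Σ_{i=0}^{k−3} (d_l−1)^i + (d_l(d_l−1) − b)(d_l−1)^{k−2}/d_l`. -/
theorem stmt18 {V : Type} [Fintype V] (G : SimpleGraph V) (isVar : V → Prop)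
    (hbip : Bipartite G isVar)
    (dl k : ℕ) (hdl : 3 ≤ dl) (hk : 2 ≤ k)
    (hreg : ∀ v, isVar v → degG G v = dl)
    (hg : G.girth = ((4 * k : ℕ) : ℕ∞))
    (S : Set V) (a b : ℕ) (hSL : S ⊆ {v | isVar v})
    (ha : S.ncard = a) (hb : (GamO G S).ncard = b)
    (helem : IsElem G S)
    (hconn : (G.induce (S ∪ Gam G S)).Connected)
    (hba : b < a) (hdb : b < dl * (dl - 1)) :
    1 + (dl : ℚ) + ((dl : ℚ) * ((dl : ℚ) - 1) - (b : ℚ)) *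
        (∑ i ∈ Finset.range (k - 2), ((dl : ℚ) - 1) ^ i)
      + ((dl : ℚ) * ((dl : ℚ) - 1) - (b : ℚ)) * ((dl : ℚ) - 1) ^ (k - 2) / (dl : ℚ)
      ≤ (a : ℚ) := by
  classical
  -- basic facts about the bipartition
  have hSvar : ∀ {v : V}, v ∈ S → isVar v := fun h => hSL h
  have hGamChk : ∀ {c : V}, c ∈ Gam G S → ¬ isVar c := by
    rintro c ⟨v, hv, hadj⟩ hc
    exact ((hbip v c hadj).mp (hSvar hv)) hc
  -- cycles in G have length at least 4k
  have hcyc : ∀ {x : V} (w : G.Walk x x), w.IsCycle → 4 * k ≤ w.length := by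
    intro x w hw
    have hnac : ¬ G.IsAcyclic := fun h => h w hw
    have h2 : G.egirth ≠ ⊤ := fun h => hnac (egirth_eq_top.mp h)
    have h3 : G.egirth = ((4 * k : ℕ) : ℕ∞) := by
      rw [← hg]
      exact (ENat.coe_toNat h2).symm
    have h1 : G.egirth ≤ (w.length : ℕ∞) := le_egirth.mp le_rfl x w hw
    rw [h3] at h1
    exact_mod_cast h1
  -- the induced graph
  set T : Set V := S ∪ Gam G S with hTdef
  -- checks incident to S are in Gam
  have hGamMem : ∀ {v c : V}, v ∈ S → G.Adj v c → c ∈ Gam G S := by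
    intro v c hv hadj
    exact ⟨v, hv, hadj⟩
  -- cycles in the induced graph have length ≥ 4k
  have hcycI : ∀ {x : ↥T} (w : (G.induce T).Walk x x), w.IsCycle → 4 * k ≤ w.length := by
    intro x w hw
    have hinj : Function.Injective (SimpleGraph.Embedding.induce (G := G) T).toHom := by
      intro y z h
      exact Subtype.val_injective h
    have := hw.map (f := (SimpleGraph.Embedding.induce (G := G) T).toHom) hinj
    have hl := hcyc _ this
    rwa [Walk.length_map] at hl
  -- finsets
  have hSfin : S.Finite := S.toFinite
  have hOfin : (GamO G S).Finite := (GamO G S).toFinite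
  set SF : Finset V := hSfin.toFinset with hSFdef
  set OF : Finset V := hOfin.toFinset with hOFdef
  have hSFcard : SF.card = a := by rw [← ha, Set.ncard_eq_toFinset_card S hSfin]
  have hOFcard : OF.card = b := by rw [← hb, Set.ncard_eq_toFinset_card _ hOfin]
  have hSFmem : ∀ {v : V}, v ∈ SF ↔ v ∈ S := by
    intro v; rw [hSFdef, Set.Finite.mem_toFinset]
  have hOFmem : ∀ {c : V}, c ∈ OF ↔ c ∈ GamO G S := by
    intro c; rw [hOFdef, Set.Finite.mem_toFinset]
  -- the number of unsatisfied checks adjacent to a variable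
  set uu : V → ℕ := fun v => (OF.filter (fun c => G.Adj v c)).card with huudef
  -- degree of odd checks is 1
  have hdeg1 : ∀ {c : V}, c ∈ GamO G S → degIn G S c = 1 := by
    rintro c ⟨hcG, hodd⟩
    rcases helem c hcG with h | h
    · exact h
    · rw [h] at hodd
      rcases hodd with ⟨m, hm⟩
      omega
  have hdeg2 : ∀ {c : V}, c ∈ Gam G S → c ∉ GamO G S → degIn G S c = 2 := by
    intro c hcG hcO
    rcases helem c hcG with h | h
    · exact absurd ⟨hcG, h ▸ odd_one⟩ hcO
    · exact h
  -- double counting: the sum of uu over S equals b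
  have hsum_u : ∑ v ∈ SF, uu v = b := by
    have h1 : ∀ v, uu v = ∑ c ∈ OF, if G.Adj v c then 1 else 0 := by
      intro v; rw [huudef]; exact Finset.card_filter _ _
    have h2 : ∑ v ∈ SF, uu v = ∑ c ∈ OF, ∑ v ∈ SF, if G.Adj v c then 1 else 0 := by
      simp only [h1]
      exact Finset.sum_comm
    have h3 : ∀ c ∈ OF, (∑ v ∈ SF, if G.Adj v c then 1 else 0) = 1 := by
      intro c hc
      have : (∑ v ∈ SF, if G.Adj v c then 1 else 0) = (SF.filter (fun v => G.Adj v c)).card :=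
        (Finset.card_filter _ _).symm
      rw [this]
      have hset : ((SF.filter (fun v => G.Adj v c)) : Set V) = {v | v ∈ S ∧ G.Adj c v} := by
        ext v
        simp only [Finset.coe_filter, Set.mem_setOf_eq, hSFmem]
        rw [adj_comm]
      have : (SF.filter (fun v => G.Adj v c)).card = degIn G S c := by
        rw [← Set.ncard_coe_finset, hset]; rfl
      rw [this]
      exact hdeg1 (hOFmem.mp hc)
    rw [h2, Finset.sum_congr rfl h3, Finset.sum_const, smul_eq_mul, mul_one, hOFcard]
  -- there is a variable with no unsatisfied neighbor
  obtain ⟨v0, hv0SF, hv0u⟩ : ∃ v0 ∈ SF, uu v0 = 0 := by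
    by_contra hcon
    push_neg at hcon
    have : SF.card ≤ ∑ v ∈ SF, uu v := by
      rw [Finset.card_eq_sum_ones]
      exact Finset.sum_le_sum (fun v hv => Nat.one_le_iff_ne_zero.mpr (hcon v hv))
    omega
  have hv0S : v0 ∈ S := hSFmem.mp hv0SF
  -- the vertex type of the induced graph
  set I : SimpleGraph ↥T := G.induce T with hIdef
  have hadjI : ∀ {x y : ↥T}, I.Adj x y ↔ G.Adj ↑x ↑y := Iff.rfl
  set x0 : ↥T := ⟨v0, Or.inl hv0S⟩ with hx0def
  set d : ↥T → ℕ := fun x => I.dist x0 x with hddef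
  have hreach : ∀ x y : ↥T, I.Reachable x y := fun x y => hconn.preconnected x y
  have hd0 : d x0 = 0 := dist_self
  -- vertices of T are either variables in S or checks in Gam
  have hvarS : ∀ x : ↥T, isVar (↑x : V) → ↑x ∈ S := by
    intro x hx
    rcases x.2 with h | h
    · exact h
    · exact absurd hx (hGamChk h)
  -- parity: d is even iff the vertex is a variable
  have hside : ∀ x : ↥T, Even (d x) ↔ isVar (↑x : V) := by
    intro x
    obtain ⟨p, hp⟩ := (hreach x0 x).exists_walk_length_eq_dist
    have hpar := walk_parity_s18 (G := I) (fun y => isVar (↑y : V))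
      (fun y z h => hbip ↑y ↑z (hadjI.mp h)) p
    rw [hp] at hpar
    rw [hddef]
    rw [hpar]
    have hv0var : isVar v0 := hSvar hv0S
    constructor
    · intro h; exact h.mp hv0var
    · intro h; exact ⟨fun _ => h, fun _ => hv0var⟩
  -- adjacent vertices differ by one in distance
  have hd_adj : ∀ x y : ↥T, I.Adj x y → d y + 1 = d x ∨ d x + 1 = d y := by
    intro x y hxy
    have h1 : d y ≤ d x + 1 := by
      have := hconn.dist_triangle (u := x0) (v := x) (w := y)
      have h2 : I.dist x y ≤ 1 := by
        have := dist_le (Walk.cons hxy Walk.nil)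
        simpa using this
      simp only [hddef]
      omega
    have h2 : d x ≤ d y + 1 := by
      have := hconn.dist_triangle (u := x0) (v := y) (w := x)
      have h3 : I.dist y x ≤ 1 := by
        have := dist_le (Walk.cons hxy.symm Walk.nil)
        simpa using this
      simp only [hddef]
      omega
    have h3 : d x ≠ d y := by
      intro h
      have hbxy := hbip ↑x ↑y (hadjI.mp hxy)
      have hsx := hside x
      have hsy := hside y
      rw [h] at hsx
      tauto
    omega
  -- every vertex at positive distance has a predecessor
  have hpred : ∀ x : ↥T, 1 ≤ d x → ∃ y : ↥T, I.Adj x y ∧ d y + 1 = d x := by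
    intro x hx
    obtain ⟨p, hp, hplen⟩ := (hreach x0 x).exists_path_of_dist
    cases hrev : p.reverse with
    | nil =>
      exfalso
      have := congrArg Walk.length hrev
      rw [Walk.length_reverse] at this
      simp only [Walk.length_nil] at this
      simp only [hddef] at hx
      omega
    | @cons _ y _ hadj q =>
      refine ⟨y, hadj, ?_⟩
      have hq : I.dist x0 y ≤ q.length := by
        rw [SimpleGraph.dist_comm]
        exact dist_le q
      have hlen : q.length + 1 = p.length := by
        have := congrArg Walk.length hrev
        rw [Walk.length_reverse] at this
        simp only [Walk.length_cons] at this
        omega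
      have hda := hd_adj x y hadj
      simp only [hddef] at *
      omega
  -- uniqueness of the predecessor for short distances
  have hUP : ∀ x : ↥T, 1 ≤ d x → d x ≤ 2 * k - 1 → ∀ y1 y2 : ↥T,
      I.Adj x y1 → I.Adj x y2 → d y1 + 1 = d x → d y2 + 1 = d x → y1 = y2 := by
    intro x hx1 hx2 y1 y2 ha1 ha2 hd1 hd2
    by_contra hne
    obtain ⟨p1, hp1, hl1⟩ := (hreach x0 y1).exists_path_of_dist
    obtain ⟨p2, hp2, hl2⟩ := (hreach x0 y2).exists_path_of_dist
    have hnotin : ∀ (yy : ↥T) (p : I.Walk x0 yy), p.IsPath → p.length + 1 = d x →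
        x ∉ p.support := by
      intro yy p hp hplen hmem
      have h1 : I.dist x0 x ≤ (p.takeUntil x hmem).length :=
        dist_le (p.takeUntil x hmem)
      have h2 : (p.takeUntil x hmem).length ≤ p.length := Walk.length_takeUntil_le p hmem
      simp only [hddef] at *
      omega
    have hm1 : x ∉ p1.support := hnotin y1 p1 hp1 (by simp only [hddef] at *; omega)
    have hm2 : x ∉ p2.support := hnotin y2 p2 hp2 (by simp only [hddef] at *; omega)
    set r1 : I.Walk x0 x := p1.concat ha1.symm with hr1def
    set r2 : I.Walk x0 x := p2.concat ha2.symm with hr2def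
    have hr1 : r1.IsPath := by
      rw [← Walk.isPath_reverse_iff, hr1def, Walk.reverse_concat, Walk.cons_isPath_iff]
      refine ⟨hp1.reverse, ?_⟩
      rw [Walk.support_reverse, List.mem_reverse]
      exact hm1
    have hr2 : r2.IsPath := by
      rw [← Walk.isPath_reverse_iff, hr2def, Walk.reverse_concat, Walk.cons_isPath_iff]
      refine ⟨hp2.reverse, ?_⟩
      rw [Walk.support_reverse, List.mem_reverse]
      exact hm2
    have hrne : r1 ≠ r2 := by
      intro h
      have he1 : s((y1 : ↥T), x) ∈ r1.edges := by
        rw [hr1def, Walk.edges_concat]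
        simp
      rw [h, hr2def, Walk.edges_concat, List.concat_eq_append, List.mem_append,
        List.mem_singleton] at he1
      rcases he1 with he1 | he1
      · exact hm2 (Walk.snd_mem_support_of_mem_edges p2 he1)
      · simp only [List.mem_singleton, Sym2.eq_iff] at he1
        rcases he1 with ⟨h1, -⟩ | ⟨h1, h2⟩
        · exact hne h1
        · exact (I.ne_of_adj ha2) h2
    obtain ⟨z, c, hc, hclen⟩ := two_paths_cycle (r1.length + r2.length) r1 r2 hr1 hr2 hrne le_rfl
    have h4k := hcycI c hc
    have hll1 : r1.length = p1.length + 1 := Walk.length_concat _ _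
    have hll2 : r2.length = p2.length + 1 := Walk.length_concat _ _
    simp only [hddef] at *
    omega
  -- variables in S have exactly dl neighbors in the induced graph
  have hdegW : ∀ x : ↥T, (↑x : V) ∈ S →
      (Finset.univ.filter (fun y : ↥T => I.Adj x y)).card = dl := by
    intro x hxS
    have hns : (G.neighborSet ↑x).ncard = dl := hreg ↑x (hSvar hxS)
    have hnfin : (G.neighborSet (↑x : V)).Finite := (G.neighborSet ↑x).toFinite
    rw [Set.ncard_eq_toFinset_card _ hnfin] at hns
    rw [← hns]
    apply Finset.card_bij (fun (y : ↥T) _ => (y : V))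
    · intro y hy
      rw [Set.Finite.mem_toFinset]
      exact hadjI.mp (Finset.mem_filter.mp hy).2
    · intro y1 h1 y2 h2 hxy
      exact Subtype.val_injective hxy
    · intro c hc
      rw [Set.Finite.mem_toFinset] at hc
      have hcT : c ∈ T := Or.inr (hGamMem hxS hc)
      refine ⟨⟨c, hcT⟩, ?_, rfl⟩
      simp only [Finset.mem_filter, Finset.mem_univ, true_and]
      exact hadjI.mpr hc
  -- neighborhood finset
  set NbrF : ↥T → Finset ↥T := fun x => Finset.univ.filter (fun y => I.Adj x y) with hNbrFdef
  have hNbrFmem : ∀ {x y : ↥T}, y ∈ NbrF x ↔ I.Adj x y := by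
    intro x y
    simp [hNbrFdef]
  have hdegW' : ∀ x : ↥T, (↑x : V) ∈ S → (NbrF x).card = dl := hdegW
  -- neighbors of checks are variables of S
  have hchk_var : ∀ y z : ↥T, (↑y : V) ∈ Gam G S → I.Adj y z → (↑z : V) ∈ S := by
    intro y z hyG hadj
    have h1 := hbip ↑y ↑z (hadjI.mp hadj)
    have h2 : ¬ isVar (↑y : V) := hGamChk hyG
    have h3 : isVar (↑z : V) := by tauto
    exact hvarS z h3
  have hvar_chk : ∀ x y : ↥T, (↑x : V) ∈ S → I.Adj x y → (↑y : V) ∈ Gam G S := by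
    intro x y hxS hadj
    exact hGamMem hxS (hadjI.mp hadj)
  -- satisfied checks have exactly two neighbors
  have hother : ∀ y : ↥T, (↑y : V) ∈ Gam G S → (↑y : V) ∉ GamO G S → ∀ z : ↥T, I.Adj y z →
      ∃ w : ↥T, I.Adj y w ∧ w ≠ z ∧ (↑w : V) ∈ S ∧
        (∀ w' : ↥T, I.Adj y w' → w' = z ∨ w' = w) := by
    intro y hyG hyO z hadj
    have h2 : degIn G S ↑y = 2 := hdeg2 hyG hyO
    rw [degIn, Set.ncard_eq_two] at h2
    obtain ⟨p, q, hpq, hD⟩ := h2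
    have hzD : (↑z : V) ∈ {v | v ∈ S ∧ G.Adj ↑y v} := ⟨hchk_var y z hyG hadj, hadjI.mp hadj⟩
    have hpD : p ∈ {v | v ∈ S ∧ G.Adj (↑y : V) v} := by rw [hD]; exact Set.mem_insert _ _
    have hqD : q ∈ {v | v ∈ S ∧ G.Adj (↑y : V) v} := by
      rw [hD]; exact Set.mem_insert_iff.mpr (Or.inr rfl)
    rw [hD, Set.mem_insert_iff, Set.mem_singleton_iff] at hzD
    have hmemW : ∀ {o : V}, o ∈ S → o ∈ T := fun ho => Or.inl ho
    rcases hzD with hz | hz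
    · -- z = p, other is q
      refine ⟨⟨q, hmemW hqD.1⟩, hadjI.mpr hqD.2, ?_, hqD.1, ?_⟩
      · intro h
        apply hpq
        have hval : q = (↑z : V) := congrArg Subtype.val h
        rw [← hz, ← hval]
      · intro w' hw'
        have hw'D : (↑w' : V) ∈ {v | v ∈ S ∧ G.Adj (↑y : V) v} :=
          ⟨hchk_var y w' hyG hw', hadjI.mp hw'⟩
        rw [hD, Set.mem_insert_iff, Set.mem_singleton_iff] at hw'D
        rcases hw'D with h | h
        · left; apply Subtype.ext; rw [h, ← hz]
        · right; apply Subtype.ext; exact h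
    · -- z = q, other is p
      refine ⟨⟨p, hmemW hpD.1⟩, hadjI.mpr hpD.2, ?_, hpD.1, ?_⟩
      · intro h
        apply hpq
        have hval : p = (↑z : V) := congrArg Subtype.val h
        rw [hval, hz]
      · intro w' hw'
        have hw'D : (↑w' : V) ∈ {v | v ∈ S ∧ G.Adj (↑y : V) v} :=
          ⟨hchk_var y w' hyG hw', hadjI.mp hw'⟩
        rw [hD, Set.mem_insert_iff, Set.mem_singleton_iff] at hw'D
        rcases hw'D with h | h
        · right; apply Subtype.ext; exact h
        · left; apply Subtype.ext; rw [h, ← hz]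
  -- membership helpers: variables at even distance
  have hvar_of_even : ∀ x : ↥T, Even (d x) → (↑x : V) ∈ S :=
    fun x h => hvarS x ((hside x).mp h)
  have hchk_of_odd : ∀ x : ↥T, ¬ Even (d x) → (↑x : V) ∈ Gam G S := by
    intro x h
    rcases x.2 with hx | hx
    · exact absurd ((hside x).mpr (hSvar hx)) h
    · exact hx
  -- levels
  set VL : ℕ → Finset ↥T := fun i =>
    Finset.univ.filter (fun x => (↑x : V) ∈ S ∧ d x = 2 * i) with hVLdef
  set CH : ℕ → Finset ↥T := fun i =>
    Finset.univ.filter (fun y =>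
      (↑y : V) ∈ Gam G S ∧ (↑y : V) ∉ GamO G S ∧ d y = 2 * i + 1) with hCHdef
  have hVLmem : ∀ {i} {x : ↥T}, x ∈ VL i ↔ ((↑x : V) ∈ S ∧ d x = 2 * i) := by
    intro i x; simp [hVLdef]
  have hCHmem : ∀ {i} {y : ↥T}, y ∈ CH i ↔
      ((↑y : V) ∈ Gam G S ∧ (↑y : V) ∉ GamO G S ∧ d y = 2 * i + 1) := by
    intro i y; simp [hCHdef]
  set NN : ℕ → ℕ := fun i => (VL i).card with hNNdef
  set UUU : ℕ → ℕ := fun i => ∑ x ∈ VL i, uu ↑x with hUUUdef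
  -- each check at odd level ≤ 2k-1 has a child variable at the next level
  have hch_ex : ∀ i, 2 * i + 1 ≤ 2 * k - 1 → ∀ y ∈ CH i,
      ∃ w : ↥T, I.Adj y w ∧ (↑w : V) ∈ S ∧ d w = 2 * i + 2 := by
    intro i hik y hy
    rw [hCHmem] at hy
    obtain ⟨hyG, hyO, hyd⟩ := hy
    obtain ⟨z, hza, hzd⟩ := hpred y (by omega)
    obtain ⟨w, hwa, hwz, hwS, -⟩ := hother y hyG hyO z hza
    refine ⟨w, hwa, hwS, ?_⟩
    rcases hd_adj y w hwa with h | h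
    · -- w is also a parent: contradiction with uniqueness
      exfalso
      exact hwz (hUP y (by omega) (by omega) w z hwa hza (by omega) (by omega))
    · omega
  -- the child map
  set chf : ℕ → ↥T → ↥T := fun i y =>
    if h : ∃ w : ↥T, I.Adj y w ∧ (↑w : V) ∈ S ∧ d w = 2 * i + 2 then h.choose else y
    with hchfdef
  have hchf_spec : ∀ i (y : ↥T), (∃ w : ↥T, I.Adj y w ∧ (↑w : V) ∈ S ∧ d w = 2 * i + 2) →
      I.Adj y (chf i y) ∧ (↑(chf i y) : V) ∈ S ∧ d (chf i y) = 2 * i + 2 := by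
    intro i y h
    simp only [hchfdef, dif_pos h]
    exact h.choose_spec
  -- the child map sends CH i into VL (i+1)
  have hchf_maps : ∀ i, 2 * i + 1 ≤ 2 * k - 1 → ∀ y ∈ CH i, chf i y ∈ VL (i + 1) := by
    intro i hik y hy
    obtain ⟨h1, h2, h3⟩ := hchf_spec i y (hch_ex i hik y hy)
    rw [hVLmem]
    constructor
    · exact h2
    · omega
  -- injectivity of the child map on CH i when the children are still at low depth
  have hchf_inj : ∀ i, 2 * i + 2 ≤ 2 * k - 1 → ∀ y1 ∈ CH i, ∀ y2 ∈ CH i,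
      chf i y1 = chf i y2 → y1 = y2 := by
    intro i hik y1 hy1 y2 hy2 heq
    obtain ⟨h11, h12, h13⟩ := hchf_spec i y1 (hch_ex i (by omega) y1 hy1)
    obtain ⟨h21, h22, h23⟩ := hchf_spec i y2 (hch_ex i (by omega) y2 hy2)
    rw [hCHmem] at hy1 hy2
    rw [heq] at h11 h13
    exact hUP (chf i y2) (by omega) (by omega) y1 y2 h11.symm h21.symm
      (by omega) (by omega)
  have hCHcard : ∀ i, 2 * i + 2 ≤ 2 * k - 1 → (CH i).card ≤ NN (i + 1) := by
    intro i hik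
    exact Finset.card_le_card_of_injOn (chf i) (hchf_maps i (by omega))
      (fun y1 h1 y2 h2 => hchf_inj i hik y1 h1 y2 h2)
  have hCHlast : (CH (k - 1)).card ≤ dl * NN k := by
    have hik : 2 * (k - 1) + 1 ≤ 2 * k - 1 := by omega
    apply Finset.card_le_mul_card_image_of_maps_to
      (f := chf (k - 1)) (t := VL k)
    · intro y hy
      have := hchf_maps (k - 1) hik y hy
      have hke : k - 1 + 1 = k := by omega
      rwa [hke] at this
    · intro w hw
      rw [hVLmem] at hw
      have hsub : (CH (k - 1)).filter (fun y => chf (k - 1) y = w) ⊆ NbrF w := by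
        intro y hy
        rw [Finset.mem_filter] at hy
        obtain ⟨hy1, hy2⟩ := hy
        obtain ⟨ha1, -, -⟩ := hchf_spec (k - 1) y (hch_ex (k - 1) hik y hy1)
        rw [hy2] at ha1
        exact hNbrFmem.mpr ha1.symm
      calc ((CH (k - 1)).filter (fun y => chf (k - 1) y = w)).card ≤ (NbrF w).card :=
            Finset.card_le_card hsub
        _ = dl := hdegW' w hw.1
  -- level 0
  have H0 : 1 ≤ NN 0 := by
    apply Finset.card_pos.mpr
    exact ⟨x0, hVLmem.mpr ⟨hv0S, by rw [hd0]⟩⟩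
  -- level 1
  have hNbrCH0 : NbrF x0 ⊆ CH 0 := by
    intro y hy
    have hadj := hNbrFmem.mp hy
    have hyG : (↑y : V) ∈ Gam G S := hvar_chk x0 y hv0S hadj
    have hyO : (↑y : V) ∉ GamO G S := by
      intro hyO
      have hmem : (↑y : V) ∈ OF.filter (fun c => G.Adj v0 c) := by
        rw [Finset.mem_filter]
        exact ⟨hOFmem.mpr hyO, hadjI.mp hadj⟩
      have hcard : 0 < (OF.filter (fun c => G.Adj v0 c)).card :=
        Finset.card_pos.mpr ⟨_, hmem⟩
      have hv0u' : (OF.filter (fun c => G.Adj v0 c)).card = 0 := hv0u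
      omega
    have hda := hd_adj x0 y hadj
    have h00 := hd0
    have hyd : d y = 2 * 0 + 1 := by rcases hda with h | h <;> omega
    exact hCHmem.mpr ⟨hyG, hyO, hyd⟩
  have H1 : dl ≤ NN 1 := by
    calc dl = (NbrF x0).card := (hdegW' x0 hv0S).symm
      _ ≤ (CH 0).card := Finset.card_le_card hNbrCH0
      _ ≤ NN 1 := hCHcard 0 (by omega)
  -- the key per-level inequality
  have hkey : ∀ i, 1 ≤ i → i ≤ k - 1 →
      NN i * dl ≤ NN i + UUU i + (CH i).card := by
    intro i hi1 hik
    have hx : ∀ x ∈ VL i, dl ≤ 1 + uu ↑x +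
        ((NbrF x).filter (fun y => y ∈ CH i)).card := by
      intro x hxmem
      rw [hVLmem] at hxmem
      obtain ⟨hxS, hxd⟩ := hxmem
      have hcover : NbrF x ⊆
          ((NbrF x).filter (fun y => d y + 1 = d x) ∪
            (NbrF x).filter (fun y : ↥T => (y : V) ∈ GamO G S)) ∪
          (NbrF x).filter (fun y => y ∈ CH i) := by
        intro y hy
        have hadj := hNbrFmem.mp hy
        have hyG := hvar_chk x y hxS hadj
        rcases hd_adj x y hadj with h | h
        · exact Finset.mem_union_left _
            (Finset.mem_union_left _ (Finset.mem_filter.mpr ⟨hy, h⟩))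
        · by_cases hyO : (↑y : V) ∈ GamO G S
          · exact Finset.mem_union_left _
              (Finset.mem_union_right _ (Finset.mem_filter.mpr ⟨hy, hyO⟩))
          · refine Finset.mem_union_right _ (Finset.mem_filter.mpr ⟨hy, ?_⟩)
            exact hCHmem.mpr ⟨hyG, hyO, by omega⟩
      have hPcard : ((NbrF x).filter (fun y => d y + 1 = d x)).card ≤ 1 := by
        rw [Finset.card_le_one]
        intro y1 hy1 y2 hy2
        rw [Finset.mem_filter] at hy1 hy2
        exact hUP x (by omega) (by omega) y1 y2 (hNbrFmem.mp hy1.1)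
          (hNbrFmem.mp hy2.1) hy1.2 hy2.2
      have hOcard : ((NbrF x).filter (fun y : ↥T => (y : V) ∈ GamO G S)).card ≤ uu ↑x := by
        have hgoal : ((NbrF x).filter (fun y : ↥T => (y : V) ∈ GamO G S)).card
            ≤ (OF.filter (fun c => G.Adj ↑x c)).card := by
          apply Finset.card_le_card_of_injOn (Subtype.val : ↥T → V)
          · intro y hy
            rw [Finset.mem_coe, Finset.mem_filter] at hy
            rw [Finset.mem_coe, Finset.mem_filter]
            exact ⟨hOFmem.mpr hy.2, hadjI.mp (hNbrFmem.mp hy.1)⟩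
          · intro y1 _ y2 _ h
            exact Subtype.val_injective h
        exact hgoal
      have hu1 := Finset.card_union_le
        ((NbrF x).filter (fun y => d y + 1 = d x) ∪
          (NbrF x).filter (fun y : ↥T => (y : V) ∈ GamO G S))
        ((NbrF x).filter (fun y => y ∈ CH i))
      have hu2 := Finset.card_union_le
        ((NbrF x).filter (fun y => d y + 1 = d x))
        ((NbrF x).filter (fun y : ↥T => (y : V) ∈ GamO G S))
      have hcov := Finset.card_le_card hcover
      have hdx := hdegW' x hxS
      omega
    have hsum1 : ∑ _x ∈ VL i, dl ≤
        ∑ x ∈ VL i, (1 + uu ↑x + ((NbrF x).filter (fun y => y ∈ CH i)).card) :=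
      Finset.sum_le_sum hx
    have hdisjA : ∀ x1 ∈ VL i, ∀ x2 ∈ VL i, x1 ≠ x2 →
        Disjoint ((NbrF x1).filter (fun y => y ∈ CH i))
          ((NbrF x2).filter (fun y => y ∈ CH i)) := by
      intro x1 h1 x2 h2 hne
      rw [Finset.disjoint_left]
      intro y hy1 hy2
      rw [Finset.mem_filter] at hy1 hy2
      rw [hVLmem] at h1 h2
      have hyCH := hy1.2
      rw [hCHmem] at hyCH
      apply hne
      exact hUP y (by omega) (by omega) x1 x2 (hNbrFmem.mp hy1.1).symm
        (hNbrFmem.mp hy2.1).symm (by omega) (by omega)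
    have hbu : ∑ x ∈ VL i, ((NbrF x).filter (fun y => y ∈ CH i)).card
        = ((VL i).biUnion (fun x => (NbrF x).filter (fun y => y ∈ CH i))).card :=
      (Finset.card_biUnion hdisjA).symm
    have hsubCH : (VL i).biUnion (fun x => (NbrF x).filter (fun y => y ∈ CH i)) ⊆ CH i := by
      intro y hy
      rw [Finset.mem_biUnion] at hy
      obtain ⟨x, -, hy⟩ := hy
      exact (Finset.mem_filter.mp hy).2
    have hsubCHcard := Finset.card_le_card hsubCH
    have hexp : ∑ x ∈ VL i, (1 + uu ↑x + ((NbrF x).filter (fun y => y ∈ CH i)).card)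
        = NN i + UUU i + ∑ x ∈ VL i, ((NbrF x).filter (fun y => y ∈ CH i)).card := by
      rw [Finset.sum_add_distrib, Finset.sum_add_distrib, Finset.sum_const, smul_eq_mul,
        mul_one, hNNdef, hUUUdef]
    have hlhs : ∑ _x ∈ VL i, dl = NN i * dl := by
      rw [Finset.sum_const, smul_eq_mul, hNNdef]
    omega
  -- step inequality
  have Hstep : ∀ i, 1 ≤ i → i ≤ k - 2 → NN i * dl ≤ NN i + UUU i + NN (i + 1) := by
    intro i hi1 hik
    have h1 := hkey i hi1 (by omega)
    have h2 := hCHcard i (by omega)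
    omega
  -- last inequality
  have Hlast : NN (k - 1) * dl ≤ NN (k - 1) + UUU (k - 1) + dl * NN k := by
    have h1 := hkey (k - 1) (by omega) le_rfl
    have h2 := hCHlast
    omega
  -- sum of the u's
  have HsumU : ∑ i ∈ Finset.Icc 1 (k - 1), UUU i ≤ b := by
    have hdisj : Set.PairwiseDisjoint ↑(Finset.Icc 1 (k - 1)) VL :=
      fun i1 _h1 i2 _h2 hne => by
        simp only [Function.onFun]
        rw [Finset.disjoint_left]
        intro x hx1 hx2
        rw [hVLmem] at hx1 hx2
        exact hne (by omega)
    have h1 : ∑ i ∈ Finset.Icc 1 (k - 1), UUU i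
        = ∑ y ∈ (Finset.Icc 1 (k - 1)).biUnion VL, uu ↑y := by
      rw [Finset.sum_biUnion hdisj]
    have h2 : ∑ y ∈ (Finset.Icc 1 (k - 1)).biUnion VL, uu ↑y
        = ∑ v ∈ ((Finset.Icc 1 (k - 1)).biUnion VL).image (Subtype.val : ↥T → V), uu v := by
      rw [Finset.sum_image]
      intro y1 _ y2 _ h
      exact Subtype.val_injective h
    have h3 : ((Finset.Icc 1 (k - 1)).biUnion VL).image (Subtype.val : ↥T → V) ⊆ SF := by
      intro v hv
      rw [Finset.mem_image] at hv
      obtain ⟨y, hy, rfl⟩ := hv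
      rw [Finset.mem_biUnion] at hy
      obtain ⟨i, -, hy⟩ := hy
      exact hSFmem.mpr (hVLmem.mp hy).1
    have h4 : ∑ v ∈ ((Finset.Icc 1 (k - 1)).biUnion VL).image (Subtype.val : ↥T → V), uu v
        ≤ ∑ v ∈ SF, uu v := Finset.sum_le_sum_of_subset h3
    omega
  -- sum of level sizes
  have HsumN : ∑ i ∈ Finset.range (k + 1), NN i ≤ a := by
    have hdisj : ∀ i1 ∈ Finset.range (k + 1), ∀ i2 ∈ Finset.range (k + 1), i1 ≠ i2 →
        Disjoint (VL i1) (VL i2) := by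
      intro i1 _ i2 _ hne
      rw [Finset.disjoint_left]
      intro x hx1 hx2
      rw [hVLmem] at hx1 hx2
      exact hne (by omega)
    have h1 : ∑ i ∈ Finset.range (k + 1), NN i
        = ((Finset.range (k + 1)).biUnion VL).card := (Finset.card_biUnion hdisj).symm
    have h2 : ((Finset.range (k + 1)).biUnion VL).card ≤ SF.card := by
      apply Finset.card_le_card_of_injOn (Subtype.val : ↥T → V)
      · intro y hy
        rw [Finset.mem_coe, Finset.mem_biUnion] at hy
        obtain ⟨i, -, hy⟩ := hy
        exact hSFmem.mpr (hVLmem.mp hy).1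
      · intro y1 _ y2 _ h
        exact Subtype.val_injective h
    omega
  exact arith_main dl k a b hdl hk hdb NN UUU H0 H1 Hstep Hlast HsumU HsumN
end
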